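/- arXiv:2111.01640 — 9 statements merged into one kernel-verified Lean document; each statement's English description precedes it below -/
import Mathlib

section
/- In the univariate changepoint model with changepoint z and post-change mean θ > 0, let 0 < b ≤ θ and α ∈ (0,1). Let N be an almost surely finite stopping time with respect to the natural filtration of (X_i)_{i≥1}, satisfying P(N < z) ≤ α/2. Then the confidence interval C₀ := [ N − t_{N,b} − 8·log(2/α)/b² , N ] covers the changepoint with probability at least 1 − α, i.e. P( N − t_{N,b} − 8·log(2/α)/b² ≤ z ≤ N ) ≥ 1 − α. -/
open MeasureTheory ProbabilityTheory

/-- The residual tail length `t_{n,b}`: the smallest `h ∈ {0,…,n}` maximising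
`∑_{i=n-h+1}^n (X_i - b/2)`.  Here the observations `X₁, X₂, …` are represented by
`X : ℕ → ℝ` with `X i` standing for `X_{i+1}`, so that the sum of the last `h` of the
first `n` observations is the sum over `i ∈ [n-h, n)`. -/
noncomputable def tailLen (X : ℕ → ℝ) (b : ℝ) (n : ℕ) : ℕ :=
  sInf {h : ℕ | h ≤ n ∧ ∀ h' ≤ n,
    (∑ i ∈ Finset.Ico (n - h') n, (X i - b / 2)) ≤ ∑ i ∈ Finset.Ico (n - h) n, (X i - b / 2)}

/-!
If `N ≥ z`, maximality of `t = t_{N,b}` makes `∑_{z ≤ i < N - t} (X_i - b/2)` nonpositive, so the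
interval misses `z` only if the post-change walk `S_k = ∑_{j<k} (X_{z+j} - b/2)`, whose
increments have mean `θ - b/2 ≥ b/2`, is nonpositive at some `k ≥ c = 8 log(2/α)/b²`.
On that event the product `exp (k b²/8 - (b/2) S_k)` of independent factors of mean at most one
reaches `exp (c b²/8)`, which by Ville's maximal inequality has probability at most
`exp (-c b²/8) = α/2`.
-/

open Finset

section Ville

variable {Ω : Type*} {mΩ : MeasurableSpace Ω} {μ : Measure Ω} {f : ℕ → Ω → ℝ}

abbrev pastMeasurableSpace (f : ℕ → Ω → ℝ) (n : ℕ) : MeasurableSpace Ω :=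
  ⨆ j ∈ range n, MeasurableSpace.comap (f j) inferInstance

lemma measurable_pastMeasurableSpace {j n : ℕ} (hj : j < n) :
    Measurable[pastMeasurableSpace f n] (f j) :=
  (comap_measurable (f j)).mono
    (le_iSup₂ (f := fun i (_ : i ∈ range n) => MeasurableSpace.comap (f i) inferInstance) j
      (mem_range.2 hj)) le_rfl

lemma measurable_prod_range_pastMeasurableSpace (n : ℕ) :
    Measurable[pastMeasurableSpace f n] (fun ω => ∏ j ∈ range n, f j ω) :=
  Finset.measurable_prod _ fun _ hj => measurable_pastMeasurableSpace (mem_range.1 hj)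

lemma pastMeasurableSpace_le (hf : ∀ i, Measurable (f i)) (n : ℕ) :
    pastMeasurableSpace f n ≤ mΩ :=
  iSup₂_le fun j _ => (hf j).comap_le

lemma ProbabilityTheory.iIndepFun.indepFun_of_measurable_pastMeasurableSpace
    (hindep : iIndepFun f μ) (hf : ∀ i, Measurable (f i)) {n : ℕ} {Y : Ω → ℝ}
    (hY : Measurable[pastMeasurableSpace f n] Y) :
    IndepFun Y (f n) μ := by
  have h := indep_iSup_of_disjoint (fun i => (hf i).comap_le) hindep.iIndep
    (S := (range n : Set ℕ)) (T := {n}) (by simp)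
  rw [IndepFun_iff_Indep]
  refine indep_of_indep_of_le h (hY.comap_le.trans (le_of_eq (by simp [pastMeasurableSpace]))) ?_
  exact le_iSup₂ (f := fun i (_ : i ∈ ({n} : Set ℕ)) => MeasurableSpace.comap (f i) inferInstance)
    n rfl

lemma ProbabilityTheory.iIndepFun.integrable_prod_range [IsFiniteMeasure μ]
    (hindep : iIndepFun f μ) (hf : ∀ i, Measurable (f i)) (hf_int : ∀ i, Integrable (f i) μ)
    (n : ℕ) : Integrable (fun ω => ∏ j ∈ range n, f j ω) μ := by
  induction n with
  | zero => simp
  | succ n ih =>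
    simp only [prod_range_succ]
    exact (hindep.indepFun_of_measurable_pastMeasurableSpace hf
      (measurable_prod_range_pastMeasurableSpace n)).integrable_mul ih (hf_int n)

lemma ProbabilityTheory.iIndepFun.setIntegral_prod_range_succ_le (hindep : iIndepFun f μ)
    (hf : ∀ i, Measurable (f i)) (hf_nonneg : ∀ i ω, 0 ≤ f i ω) (hf_mean : ∀ i, μ[f i] ≤ 1)
    {n : ℕ} {s : Set Ω} (hs : MeasurableSet[pastMeasurableSpace f n] s) :
    ∫ ω in s, ∏ j ∈ range (n + 1), f j ω ∂μ ≤ ∫ ω in s, ∏ j ∈ range n, f j ω ∂μ := by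
  have hP := measurable_prod_range_pastMeasurableSpace (f := f) n
  have hs' := pastMeasurableSpace_le hf n s hs
  have hindep_n : IndepFun (s.indicator fun ω => ∏ j ∈ range n, f j ω) (f n) μ :=
    hindep.indepFun_of_measurable_pastMeasurableSpace hf (hP.indicator hs)
  simp only [prod_range_succ]
  rw [← integral_indicator hs', ← integral_indicator hs']
  simp only [Set.indicator_mul_left]
  rw [show (fun ω => (s.indicator fun ω => ∏ j ∈ range n, f j ω) ω * f n ω)
      = (s.indicator fun ω => ∏ j ∈ range n, f j ω) * f n from rfl,
    hindep_n.integral_mul_eq_mul_integral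
      ((hP.mono (pastMeasurableSpace_le hf n) le_rfl).indicator hs').aestronglyMeasurable
      (hf n).aestronglyMeasurable]
  exact mul_le_of_le_one_right (integral_nonneg fun ω => Set.indicator_nonneg
    (fun ω _ => prod_nonneg fun j _ => hf_nonneg j ω) ω) (hf_mean n)

def prodHitBefore (f : ℕ → Ω → ℝ) (c : ℝ) (n : ℕ) : Set Ω :=
  {ω | ∃ k < n, c ≤ ∏ j ∈ range k, f j ω}

lemma measurableSet_prodHitBefore {m : MeasurableSpace Ω} {c : ℝ} {n : ℕ}
    (hf : ∀ j, j + 1 < n → Measurable[m] (f j)) : MeasurableSet[m] (prodHitBefore f c n) := by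
  have : prodHitBefore f c n = ⋃ k ∈ range n, {ω | c ≤ ∏ j ∈ range k, f j ω} := by
    ext ω; simp [prodHitBefore]
  rw [this]
  refine Finset.measurableSet_biUnion _ fun k hk => measurableSet_le measurable_const ?_
  exact Finset.measurable_prod _ fun j hj => hf j (by simp at hk hj; omega)

lemma prodHitBefore_mono (c : ℝ) : Monotone (prodHitBefore f c) :=
  fun _ _ hmn _ ⟨k, hk, h⟩ => ⟨k, by omega, h⟩

lemma ProbabilityTheory.iIndepFun.mul_measureReal_prodHitBefore_add_setIntegral_le_one
    [IsProbabilityMeasure μ] (hindep : iIndepFun f μ) (hf : ∀ i, Measurable (f i))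
    (hf_nonneg : ∀ i ω, 0 ≤ f i ω) (hf_int : ∀ i, Integrable (f i) μ)
    (hf_mean : ∀ i, μ[f i] ≤ 1) (c : ℝ) (n : ℕ) :
    c * μ.real (prodHitBefore f c n)
      + ∫ ω in (prodHitBefore f c n)ᶜ, ∏ j ∈ range n, f j ω ∂μ ≤ 1 := by
  induction n with
  | zero => simp [prodHitBefore]
  | succ n ih =>
    set A := prodHitBefore f c n
    set A' := prodHitBefore f c (n + 1)
    set P : Ω → ℝ := fun ω => ∏ j ∈ range n, f j ω
    have hA'_past : MeasurableSet[pastMeasurableSpace f n] A' :=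
      measurableSet_prodHitBefore fun j hj => measurable_pastMeasurableSpace (by omega)
    have hA' : MeasurableSet[mΩ] A' := pastMeasurableSpace_le hf n _ hA'_past
    have hP_int : Integrable P μ := hindep.integrable_prod_range hf hf_int n
    -- `D` are the paths first reaching `c` at time `n`; the others continue with a factor `f n`.
    set D := A' \ A
    have hD : MeasurableSet[mΩ] D := hA'.diff (measurableSet_prodHitBefore fun j _ => hf j)
    have hc_le_P : ∀ ω ∈ D, c ≤ P ω := by
      rintro ω ⟨⟨k, hk, hck⟩, hA⟩
      obtain rfl : k = n := by
        by_contra hkn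
        exact hA ⟨k, by omega, hck⟩
      exact hck
    have hAA' : A ⊆ A' := prodHitBefore_mono c n.le_succ
    have hA'_split : μ.real A' = μ.real A + μ.real D := by
      rw [← measureReal_union Set.disjoint_sdiff_right hD, Set.union_sdiff_cancel hAA']
    have hAc_split : ∫ ω in Aᶜ, P ω ∂μ = ∫ ω in D, P ω ∂μ + ∫ ω in A'ᶜ, P ω ∂μ := by
      have hAc : Aᶜ = D ∪ A'ᶜ := by
        ext ω
        by_cases hω : ω ∈ A' <;> simp [D, hω]
        exact fun h => hω (hAA' h)
      rw [hAc, setIntegral_union (disjoint_compl_right.mono_left Set.sdiff_subset)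
        hA'.compl hP_int.integrableOn hP_int.integrableOn]
    have hstopped : c * μ.real D ≤ ∫ ω in D, P ω ∂μ :=
      setIntegral_ge_of_const_le_real hD (measure_ne_top μ D) hc_le_P hP_int.integrableOn
    have hcontinued := hindep.setIntegral_prod_range_succ_le hf hf_nonneg hf_mean hA'_past.compl
    rw [hA'_split]
    linarith

theorem ProbabilityTheory.iIndepFun.measure_exists_le_prod_le [IsProbabilityMeasure μ]
    (hindep : iIndepFun f μ) (hf : ∀ i, Measurable (f i)) (hf_nonneg : ∀ i ω, 0 ≤ f i ω)
    (hf_int : ∀ i, Integrable (f i) μ) (hf_mean : ∀ i, μ[f i] ≤ 1) {c : ℝ} (hc : 0 < c) :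
    μ {ω | ∃ n, c ≤ ∏ j ∈ range n, f j ω} ≤ ENNReal.ofReal c⁻¹ := by
  have hunion : {ω | ∃ n, c ≤ ∏ j ∈ range n, f j ω} = ⋃ n, prodHitBefore f c n := by
    ext ω
    simp only [prodHitBefore, Set.mem_ofPred_eq, Set.mem_iUnion]
    exact ⟨fun ⟨n, h⟩ => ⟨n + 1, n, n.lt_succ_self, h⟩, fun ⟨_, k, _, h⟩ => ⟨k, h⟩⟩
  rw [hunion, (prodHitBefore_mono c).measure_iUnion]
  refine iSup_le fun n => ?_
  have hbound := hindep.mul_measureReal_prodHitBefore_add_setIntegral_le_one hf hf_nonneg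
    hf_int hf_mean c n
  have hrest : 0 ≤ ∫ ω in (prodHitBefore f c n)ᶜ, ∏ j ∈ range n, f j ω ∂μ :=
    integral_nonneg fun ω => prod_nonneg fun j _ => hf_nonneg j ω
  rw [← ofReal_measureReal]
  exact ENNReal.ofReal_le_ofReal ((le_inv_mul_iff₀ hc).2 (by linarith) |>.trans_eq (mul_one _))

end Ville

section Gaussian

open Real

variable {Ω : Type*} {mΩ : MeasurableSpace Ω} {μ : Measure Ω} {X : Ω → ℝ} {θ b : ℝ}

lemma exp_sub_half_mul_sub_half_eq (b x : ℝ) :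
    rexp (b ^ 2 / 8 - b / 2 * (x - b / 2)) = rexp (3 * b ^ 2 / 8) * rexp (-(b / 2) * x) := by
  rw [← exp_add]; ring_nf

lemma integrable_exp_sub_half_mul_sub_half [NeZero μ] (hX : μ.map X = gaussianReal θ 1) (b : ℝ) :
    Integrable (fun ω => rexp (b ^ 2 / 8 - b / 2 * (X ω - b / 2))) μ := by
  simp only [exp_sub_half_mul_sub_half_eq]
  exact (mgf_pos_iff.1 (by rw [mgf_gaussianReal hX]; positivity)).const_mul _

lemma integral_exp_sub_half_mul_sub_half_le_one (hX : μ.map X = gaussianReal θ 1)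
    (hb : 0 ≤ b) (hbθ : b ≤ θ) :
    ∫ ω, rexp (b ^ 2 / 8 - b / 2 * (X ω - b / 2)) ∂μ ≤ 1 := by
  simp only [exp_sub_half_mul_sub_half_eq]
  rw [integral_const_mul, ← mgf, mgf_gaussianReal hX, ← exp_add, exp_le_one_iff]
  push_cast
  nlinarith [mul_le_mul_of_nonneg_left hbθ hb]

theorem measure_exists_sum_sub_half_nonpos_le [IsProbabilityMeasure μ] {Y : ℕ → Ω → ℝ}
    (hY : ∀ i, Measurable (Y i)) (hindep : iIndepFun Y μ)
    (hlaw : ∀ i, μ.map (Y i) = gaussianReal θ 1) (hb : 0 ≤ b) (hbθ : b ≤ θ) (c : ℝ) :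
    μ {ω | ∃ k : ℕ, c ≤ k ∧ ∑ j ∈ range k, (Y j ω - b / 2) ≤ 0}
      ≤ ENNReal.ofReal (rexp (-(c * b ^ 2 / 8))) := by
  set g : ℝ → ℝ := fun x => rexp (b ^ 2 / 8 - b / 2 * (x - b / 2))
  have hg : Measurable g := by fun_prop
  have hprod : ∀ k ω, ∏ j ∈ range k, g (Y j ω)
      = rexp (k * (b ^ 2 / 8) - b / 2 * ∑ j ∈ range k, (Y j ω - b / 2)) := by
    intro k ω
    rw [← exp_sum, sum_sub_distrib, sum_const, card_range, nsmul_eq_mul, mul_sum]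
  have hsub : {ω | ∃ k : ℕ, c ≤ k ∧ ∑ j ∈ range k, (Y j ω - b / 2) ≤ 0}
      ⊆ {ω | ∃ k, rexp (c * b ^ 2 / 8) ≤ ∏ j ∈ range k, g (Y j ω)} := by
    rintro ω ⟨k, hck, hS⟩
    refine ⟨k, ?_⟩
    rw [hprod, exp_le_exp]
    nlinarith [sq_nonneg b]
  calc μ _ ≤ μ _ := measure_mono hsub
    _ ≤ ENNReal.ofReal (rexp (c * b ^ 2 / 8))⁻¹ :=
      (hindep.comp (fun _ => g) fun _ => hg).measure_exists_le_prod_le (fun i => hg.comp (hY i))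
        (fun _ _ => (exp_pos _).le) (fun i => integrable_exp_sub_half_mul_sub_half (hlaw i) b)
        (fun i => integral_exp_sub_half_mul_sub_half_le_one (hlaw i) hb hbθ) (exp_pos _)
    _ = ENNReal.ofReal (rexp (-(c * b ^ 2 / 8))) := by rw [exp_neg]

end Gaussian

lemma ofReal_one_sub_le_measure_of_measure_compl_le {Ω : Type*} {mΩ : MeasurableSpace Ω}
    {μ : Measure Ω} [IsProbabilityMeasure μ] {s : Set Ω} {α : ℝ} (hα : 0 ≤ α)
    (hs : μ sᶜ ≤ ENNReal.ofReal α) : ENNReal.ofReal (1 - α) ≤ μ s := by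
  calc ENNReal.ofReal (1 - α) = 1 - ENNReal.ofReal α := by
        rw [ENNReal.ofReal_sub _ hα, ENNReal.ofReal_one]
    _ ≤ 1 - μ sᶜ := tsub_le_tsub_left hs 1
    _ ≤ μ s := by
        rw [tsub_le_iff_right, ← measure_univ (μ := μ), ← Set.union_compl_self s]
        exact measure_union_le _ _

lemma tailLen_spec (x : ℕ → ℝ) (b : ℝ) (n : ℕ) :
    tailLen x b n ≤ n ∧ ∀ h ≤ n,
      ∑ i ∈ Ico (n - h) n, (x i - b / 2) ≤ ∑ i ∈ Ico (n - tailLen x b n) n, (x i - b / 2) := by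
  refine Nat.sInf_mem (s := {h | h ≤ n ∧ ∀ h' ≤ n, _}) ?_
  obtain ⟨h, hh, hmax⟩ := exists_max_image (range (n + 1))
    (fun h => ∑ i ∈ Ico (n - h) n, (x i - b / 2)) nonempty_range_add_one
  exact ⟨h, Nat.lt_succ_iff.1 (mem_range.1 hh),
    fun h' hh' => hmax h' (mem_range.2 (Nat.lt_succ_of_le hh'))⟩

lemma sub_tailLen_sub_le_of_forall_sum_pos (x : ℕ → ℝ) {b c : ℝ} {z n : ℕ} (hzn : z ≤ n)
    (hpos : ∀ k : ℕ, c ≤ k → 0 < ∑ j ∈ range k, (x (z + j) - b / 2)) :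
    (n : ℝ) - tailLen x b n - c ≤ z := by
  have hc : 0 < c := by
    by_contra! hc
    simpa using hpos 0 (by simpa using hc)
  obtain ⟨ht, hmax⟩ := tailLen_spec x b n
  set t := tailLen x b n
  by_contra! hlt
  have hzt : z ≤ n - t := by
    have : (z : ℝ) < (n - t : ℕ) := by push_cast [ht]; linarith
    exact_mod_cast this.le
  have hck : c ≤ (n - t - z : ℕ) := by push_cast [ht, hzt]; linarith
  have hsplit := sum_Ico_consecutive (fun i => x i - b / 2) hzt (Nat.sub_le n t)
  have hmax' := hmax (n - z) (Nat.sub_le n z)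
  rw [Nat.sub_sub_self hzn] at hmax'
  have := hpos _ hck
  rw [← sum_Ico_eq_sum_range (fun i => x i - b / 2)] at this
  linarith

theorem changepoint_confidence_interval_coverage_general
    {Ω : Type*} [MeasureSpace Ω] [IsProbabilityMeasure (ℙ : Measure Ω)]
    (z : ℕ) (θ : ℝ) (X : ℕ → Ω → ℝ) (hmeas : ∀ i, Measurable (X i))
    (hindep : iIndepFun X ℙ)
    (hpost : ∀ i, z ≤ i → Measure.map (X i) ℙ = gaussianReal θ 1)
    (b : ℝ) (hb : 0 < b) (hbθ : b ≤ θ)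
    (α : ℝ) (hα : 0 < α)
    (N : Ω → ℕ)
    (hfalse : ℙ {ω | N ω < z} ≤ ENNReal.ofReal (α / 2)) :
    ENNReal.ofReal (1 - α)
      ≤ ℙ {ω | (N ω : ℝ) - (tailLen (fun i => X i ω) b (N ω) : ℝ)
                - 8 * Real.log (2 / α) / b ^ 2 ≤ (z : ℝ)
              ∧ (z : ℝ) ≤ (N ω : ℝ)} := by
  set c := 8 * Real.log (2 / α) / b ^ 2
  set W := {ω | ∃ k : ℕ, c ≤ k ∧ ∑ j ∈ range k, (X (z + j) ω - b / 2) ≤ 0}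
  have hW : ℙ W ≤ ENNReal.ofReal (α / 2) := by
    have hexp : Real.exp (-(c * b ^ 2 / 8)) = α / 2 := by
      rw [show c * b ^ 2 / 8 = Real.log (2 / α) by simp only [c]; field_simp, Real.exp_neg,
        Real.exp_log (by positivity), inv_div]
    simpa only [hexp] using measure_exists_sum_sub_half_nonpos_le (fun j => hmeas (z + j))
      (hindep.precomp (add_right_injective z)) (fun j => hpost (z + j) (Nat.le_add_right z j))
      hb.le hbθ c
  set G := {ω | (N ω : ℝ) - (tailLen (fun i => X i ω) b (N ω) : ℝ) - c ≤ (z : ℝ)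
    ∧ (z : ℝ) ≤ (N ω : ℝ)}
  have hGc : Gᶜ ⊆ {ω | N ω < z} ∪ W := by
    intro ω hω
    by_contra! hgood
    simp only [Set.mem_union, Set.mem_ofPred_eq, not_or, not_lt, W, not_exists, not_and,
      not_le] at hgood
    exact hω ⟨sub_tailLen_sub_le_of_forall_sum_pos _ hgood.1 hgood.2, by exact_mod_cast hgood.1⟩
  have hGc_le : ℙ Gᶜ ≤ ENNReal.ofReal α := calc
    ℙ Gᶜ ≤ ℙ {ω | N ω < z} + ℙ W := (measure_mono hGc).trans (measure_union_le _ _)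
    _ ≤ ENNReal.ofReal (α / 2) + ENNReal.ofReal (α / 2) := add_le_add hfalse hW
    _ = ENNReal.ofReal α := by rw [← ENNReal.ofReal_add (by positivity) (by positivity)]; ring_nf
  exact ofReal_one_sub_le_measure_of_measure_compl_le hα.le hGc_le

/-- Univariate changepoint model: `X 0, X 1, …` (representing `X₁, X₂, …`) are independent,
`N(0,1)` before the changepoint `z` (i.e. for `i < z`) and `N(θ,1)` after (for `i ≥ z`),
with `θ > 0`.  Let `0 < b ≤ θ` and `α ∈ (0,1)`, and let `N` be a stopping time for the
natural filtration (the event `{N = n}` belongs to the σ-algebra generated by the first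
`n` observations) with `P(N < z) ≤ α/2`.  Then the confidence interval
`[N - t_{N,b} - 8 log(2/α)/b², N]` contains `z` with probability at least `1 - α`. -/
theorem changepoint_confidence_interval_coverage
    {Ω : Type*} [MeasureSpace Ω] [IsProbabilityMeasure (ℙ : Measure Ω)]
    (z : ℕ) (θ : ℝ) (hθ : 0 < θ) (X : ℕ → Ω → ℝ) (hmeas : ∀ i, Measurable (X i))
    (hindep : iIndepFun X ℙ)
    (hpre : ∀ i < z, Measure.map (X i) ℙ = gaussianReal 0 1)
    (hpost : ∀ i, z ≤ i → Measure.map (X i) ℙ = gaussianReal θ 1)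
    (b : ℝ) (hb : 0 < b) (hbθ : b ≤ θ)
    (α : ℝ) (hα : 0 < α) (hα1 : α < 1)
    (N : Ω → ℕ)
    (hstop : ∀ n : ℕ,
      MeasurableSet[⨆ i ∈ Finset.range n, MeasurableSpace.comap (X i) Real.measurableSpace]
        {ω | N ω = n})
    (hfalse : ℙ {ω | N ω < z} ≤ ENNReal.ofReal (α / 2)) :
    ENNReal.ofReal (1 - α)
      ≤ ℙ {ω | (N ω : ℝ) - (tailLen (fun i => X i ω) b (N ω) : ℝ)
                - 8 * Real.log (2 / α) / b ^ 2 ≤ (z : ℝ)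
              ∧ (z : ℝ) ≤ (N ω : ℝ)} :=
  changepoint_confidence_interval_coverage_general z θ X hmeas hindep hpost b hb hbθ α hα N hfalse
end

section
/- Let κ > 0 and let φ₁, φ₃, φ₄ be reals with φ₁ ≥ 4κ, φ₃ ≥ 4κ and 0 ≤ φ₄ ≤ κ, and let α ∈ ℝ. Let U ~ N(0, φ₁), Y ~ N(α·φ₃, φ₃) and Z ~ N(α·φ₄, φ₄) be independent real random variables. Then P( |U + Y + Z| / √(φ₁ + φ₃ + φ₄) ≥ |Y| / √φ₃ ) ≤ exp( −κ·α²/12 ). -/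
/-!
Put s = √φ₃, T = √(φ₁ + φ₃ + φ₄), S = U + Y + Z; by the symmetry (U, Y, Z, α) ↦ (-U, -Y, -Z, -α)
we may take α ≥ 0. On the event, T·Y ≤ T·|Y| ≤ s·|S|, so T·Y + s·S ≤ 0 or T·Y - s·S ≤ 0.
For ε = ±1, T·Y + ε s S = ε s U + (T + ε s) Y + ε s Z is Gaussian with mean
m = α s (s T + ε (s² + φ₄)) ≥ 0 and variance v = 2 s² T (T + ε s), and a Gaussian with mean
m ≥ 0 is nonpositive with probability at most exp(-m²/(2v)) / 2, half of the usual Chernoff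
bound. The constraints on κ and the φᵢ make m²/(2v) ≥ κα²/12 for both signs.
-/

open MeasureTheory ProbabilityTheory Real Set
open scoped NNReal ENNReal

namespace ProbabilityTheory

lemma gaussianReal_Iic_zero {v : ℝ≥0} (hv : v ≠ 0) : gaussianReal 0 v (Iic 0) = 2⁻¹ := by
  have := nullSingletonClass_gaussianReal (μ := 0) hv
  have h_symm : gaussianReal 0 v (Ioi 0) = gaussianReal 0 v (Iic 0) := by
    conv_rhs => rw [← neg_zero, ← gaussianReal_map_neg,
      Measure.map_apply measurable_neg measurableSet_Iic]
    rw [measure_congr Ioi_ae_eq_Ici]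
    congr 1; ext x; simp
  have h_split : gaussianReal 0 v (Iic 0) + gaussianReal 0 v (Ioi 0) = 1 := by
    rw [← measure_union (Iic_disjoint_Ioi le_rfl) measurableSet_Ioi, Iic_union_Ioi, measure_univ]
  rw [h_symm, ← two_mul] at h_split
  rw [← one_div, ENNReal.eq_div_iff two_ne_zero ENNReal.ofNat_ne_top, h_split]

lemma gaussianReal_Iic_zero_le {m : ℝ} {v : ℝ≥0} (hm : 0 ≤ m) (hv : v ≠ 0) :
    gaussianReal m v (Iic 0) ≤ ENNReal.ofReal (exp (-m ^ 2 / (2 * v)) / 2) := by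
  -- For x ≤ 0 ≤ m, (x - m)² ≥ x² + m².
  have h_pdf : ∀ x ∈ Iic (0 : ℝ),
      gaussianPDF m v x ≤ ENNReal.ofReal (exp (-m ^ 2 / (2 * v))) * gaussianPDF 0 v x := by
    intro x hx
    rw [gaussianPDF, gaussianPDF, ← ENNReal.ofReal_mul (exp_nonneg _)]
    refine ENNReal.ofReal_le_ofReal ?_
    rw [gaussianPDFReal, gaussianPDFReal, mul_left_comm, ← exp_add, ← add_div]
    gcongr
    nlinarith [mul_nonneg (neg_nonneg.2 (mem_Iic.1 hx)) hm]
  calc gaussianReal m v (Iic 0)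
      ≤ ∫⁻ x in Iic 0, ENNReal.ofReal (exp (-m ^ 2 / (2 * v))) * gaussianPDF 0 v x := by
        rw [gaussianReal_apply _ hv]
        exact setLIntegral_mono ((measurable_gaussianPDF 0 v).const_mul _) h_pdf
    _ = ENNReal.ofReal (exp (-m ^ 2 / (2 * v)) / 2) := by
        rw [lintegral_const_mul _ (measurable_gaussianPDF 0 v), ← gaussianReal_apply _ hv,
          gaussianReal_Iic_zero hv, ENNReal.ofReal_div_of_pos two_pos, ENNReal.ofReal_ofNat]
        rfl

variable {Ω ι : Type*} {mΩ : MeasurableSpace Ω} {P : Measure Ω} [IsProbabilityMeasure P]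
  {X : ι → Ω → ℝ} {m : ι → ℝ} {v : ι → ℝ≥0}

lemma iIndepFun.map_sum_mul_eq_gaussianReal (hX : ∀ i, Measurable (X i)) (h : iIndepFun X P)
    (hlaw : ∀ i, P.map (X i) = gaussianReal (m i) (v i)) (c : ι → ℝ) (s : Finset ι) :
    P.map (fun ω ↦ ∑ i ∈ s, c i * X i ω)
      = gaussianReal (∑ i ∈ s, c i * m i) (∑ i ∈ s, .mk (c i ^ 2) (sq_nonneg _) * v i) := by
  classical
  induction s using Finset.induction_on with
  | empty => simp [gaussianReal_zero_var]
  | insert j s hj ih =>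
    have h_indep : IndepFun (∑ i ∈ s, fun ω ↦ c i * X i ω) (fun ω ↦ c j * X j ω) P :=
      (h.comp (fun i x ↦ c i * x) fun i ↦ measurable_const_mul (c i)).indepFun_finsetSum_of_notMem
        (fun i ↦ (hX i).const_mul (c i)) hj
    have h_law_j : P.map (fun ω ↦ c j * X j ω)
        = gaussianReal (c j * m j) (NNReal.mk (c j ^ 2) (sq_nonneg _) * v j) := by
      rw [← gaussianReal_map_const_mul, ← hlaw j, Measure.map_map (measurable_const_mul _) (hX j)]
      rfl
    rw [← Finset.sum_fn] at ih
    have := gaussianReal_add_gaussianReal_of_indepFun h_indep ih h_law_j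
    convert this using 2
    · ext ω
      simp [Finset.sum_insert hj, add_comm]
    all_goals simp [Finset.sum_insert hj, add_comm]

lemma iIndepFun.measure_sum_mul_nonpos_le [Fintype ι] (hX : ∀ i, Measurable (X i))
    (h : iIndepFun X P) (hlaw : ∀ i, P.map (X i) = gaussianReal (m i) (v i)) (c : ι → ℝ)
    (hm : 0 ≤ ∑ i, c i * m i) (hv : 0 < ∑ i, c i ^ 2 * (v i : ℝ)) :
    P {ω | ∑ i, c i * X i ω ≤ 0}
      ≤ ENNReal.ofReal (exp (-(∑ i, c i * m i) ^ 2 / (2 * ∑ i, c i ^ 2 * (v i : ℝ))) / 2) := by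
  have h_meas : Measurable fun ω ↦ ∑ i, c i * X i ω :=
    Finset.measurable_fun_sum _ fun i _ ↦ (hX i).const_mul (c i)
  change P ((fun ω ↦ ∑ i, c i * X i ω) ⁻¹' Iic 0) ≤ _
  rw [← Measure.map_apply h_meas measurableSet_Iic,
    h.map_sum_mul_eq_gaussianReal hX hlaw]
  convert gaussianReal_Iic_zero_le hm _ using 5
  · push_cast; rfl
  · rw [← NNReal.coe_ne_zero]; push_cast; exact hv.ne'

end ProbabilityTheory

lemma comparison_margin {κ s T φ ε : ℝ} (hε : ε = 1 ∨ ε = -1) (hs : 0 < s) (hsT : s < T)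
    (hκs : 4 * κ ≤ s ^ 2) (hκT : 4 * κ + φ ≤ T ^ 2 - s ^ 2) (hφ0 : 0 ≤ φ) (hφ : φ ≤ κ) :
    0 ≤ s * T + ε * (s ^ 2 + φ) ∧ κ * (T * (T + ε * s)) ≤ 3 * (s * T + ε * (s ^ 2 + φ)) ^ 2 := by
  have hT : 0 < T := hs.trans hsT
  rcases hε with rfl | rfl
  · constructor
    · positivity
    · nlinarith [mul_le_mul_of_nonneg_left hκs (by positivity : (0:ℝ) ≤ 3 * (T + s) ^ 2),
        mul_nonneg (mul_nonneg hs.le hT.le) hφ0, mul_pos hs hT]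
  · -- With x = s (T - s): κ (T - s)² ≤ x² / 4, the bound on T² - s² gives
    -- x² + 8κx ≥ 16κ² + 4κφ, and these force 11x² - (24φ + 4κ)x + 12φ² ≥ 0
    -- (tight at φ = κ, x = 2κ), which is the claim.
    obtain ⟨u, hu, rfl⟩ : ∃ u, 0 < u ∧ T = s + u := ⟨T - s, by linarith, by ring⟩
    have h_sq : 4 * κ * u ^ 2 ≤ (s * u) ^ 2 := by nlinarith [sq_nonneg u]
    have h_lower : 16 * κ ^ 2 + 4 * κ * φ ≤ (s * u) ^ 2 + 8 * κ * (s * u) := by nlinarith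
    have h_linear : 52 * κ + 36 * φ ≤ 72 * (s * u) := by
      nlinarith [sq_nonneg (s * u - 6 * κ), sq_nonneg (s * u)]
    have h_quad : (24 * φ + 4 * κ) * (s * u) ≤ 11 * (s * u) ^ 2 + 12 * φ ^ 2 := by
      nlinarith [mul_nonneg (sub_nonneg.2 hφ) (sub_nonneg.2 h_linear), sq_nonneg (s * u - 2 * κ)]
    constructor <;> nlinarith

lemma add_nonpos_or_sub_nonpos_of_abs_div_le {s T y S : ℝ} (hs : 0 < s) (hT : 0 < T)
    (h : |y| / s ≤ |S| / T) : T * y + s * S ≤ 0 ∨ T * y - s * S ≤ 0 := by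
  rw [div_le_div_iff₀ hs hT] at h
  have hy : T * y ≤ s * |S| := by nlinarith [le_abs_self y]
  rcases abs_cases S with ⟨hS, -⟩ | ⟨hS, -⟩
  · right; rw [hS] at hy; linarith
  · left; rw [hS] at hy; linarith

section

variable {Ω : Type*} [MeasureSpace Ω] [IsProbabilityMeasure (ℙ : Measure Ω)]
  {κ φ₁ φ₃ φ₄ α : ℝ} {U Y Z : Ω → ℝ}

theorem measure_comparison_halfspace_le {ε : ℝ} (hε : ε = 1 ∨ ε = -1)
    (hκ : 0 < κ) (hφ₁ : 4 * κ ≤ φ₁) (hφ₃ : 4 * κ ≤ φ₃) (hφ₄0 : 0 ≤ φ₄) (hφ₄ : φ₄ ≤ κ)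
    (hUm : Measurable U) (hYm : Measurable Y) (hZm : Measurable Z)
    (hindep : iIndepFun ![U, Y, Z] ℙ)
    (hU : Measure.map U ℙ = gaussianReal 0 φ₁.toNNReal)
    (hY : Measure.map Y ℙ = gaussianReal (α * φ₃) φ₃.toNNReal)
    (hZ : Measure.map Z ℙ = gaussianReal (α * φ₄) φ₄.toNNReal) (hα : 0 ≤ α) :
    ℙ {ω | √(φ₁ + φ₃ + φ₄) * Y ω + ε * √φ₃ * (U ω + Y ω + Z ω) ≤ 0}
      ≤ ENNReal.ofReal (exp (-κ * α ^ 2 / 12) / 2) := by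
  set s := √φ₃
  set T := √(φ₁ + φ₃ + φ₄)
  have hs : 0 < s := sqrt_pos.2 (by linarith)
  have hsT : s < T := sqrt_lt_sqrt (by linarith) (by linarith)
  have hT : 0 < T := hs.trans hsT
  have hs2 : s ^ 2 = φ₃ := sq_sqrt (by linarith)
  have hT2 : T ^ 2 = φ₁ + φ₃ + φ₄ := sq_sqrt (by linarith)
  have hε2 : ε ^ 2 = 1 := by rcases hε with rfl | rfl <;> norm_num
  have hTε : 0 < T + ε * s := by rcases hε with rfl | rfl <;> linarith
  obtain ⟨h_pos, h_margin⟩ := comparison_margin hε hs hsT (hs2 ▸ hφ₃) (by linarith) hφ₄0 hφ₄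
  let c : Fin 3 → ℝ := ![ε * s, T + ε * s, ε * s]
  have h_event : {ω | T * Y ω + ε * s * (U ω + Y ω + Z ω) ≤ 0}
      = {ω | ∑ i, c i * ![U, Y, Z] i ω ≤ 0} := by
    ext ω
    simp only [mem_ofPred_eq, c, Fin.sum_univ_three, Matrix.cons_val_zero, Matrix.cons_val_one,
      Matrix.cons_val_two, Matrix.tail_cons, Matrix.head_cons]
    ring_nf
  have h_mean : ∑ i, c i * ![0, α * φ₃, α * φ₄] i = α * s * (s * T + ε * (s ^ 2 + φ₄)) := by
    simp only [c, Fin.sum_univ_three, Matrix.cons_val_zero, Matrix.cons_val_one,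
      Matrix.cons_val_two, Matrix.tail_cons, Matrix.head_cons, ← hs2]
    ring
  have h_var : ∑ i, c i ^ 2 * (![φ₁.toNNReal, φ₃.toNNReal, φ₄.toNNReal] i : ℝ)
      = 2 * s ^ 2 * T * (T + ε * s) := by
    simp only [c, Fin.sum_univ_three, Matrix.cons_val_zero, Matrix.cons_val_one,
      Matrix.cons_val_two, Matrix.tail_cons, Matrix.head_cons,
      Real.coe_toNNReal _ (by linarith : 0 ≤ φ₁), Real.coe_toNNReal _ (by linarith : 0 ≤ φ₃),
      Real.coe_toNNReal _ hφ₄0]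
    linear_combination (-ε ^ 2 * s ^ 2) * hT2 - (T ^ 2 + 2 * ε * s * T) * hs2 + s ^ 2 * T ^ 2 * hε2
  rw [h_event]
  refine (hindep.measure_sum_mul_nonpos_le (m := ![0, α * φ₃, α * φ₄])
    (v := ![φ₁.toNNReal, φ₃.toNNReal, φ₄.toNNReal]) (fun i ↦ by fin_cases i <;> assumption)
    (fun i ↦ by fin_cases i <;> assumption) c
    (by rw [h_mean]; exact mul_nonneg (mul_nonneg hα hs.le) h_pos)
    (by rw [h_var]; exact mul_pos (by positivity) hTε)).trans ?_
  rw [h_mean, h_var]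
  gcongr ENNReal.ofReal (exp ?_ / 2)
  rw [neg_mul, neg_div, neg_div, neg_le_neg_iff, div_le_div_iff₀ (by norm_num) (by positivity)]
  nlinarith [mul_le_mul_of_nonneg_left h_margin (sq_nonneg (α * s))]

theorem normal_comparison_of_nonneg
    (hκ : 0 < κ) (hφ₁ : 4 * κ ≤ φ₁) (hφ₃ : 4 * κ ≤ φ₃) (hφ₄0 : 0 ≤ φ₄) (hφ₄ : φ₄ ≤ κ)
    (hUm : Measurable U) (hYm : Measurable Y) (hZm : Measurable Z)
    (hindep : iIndepFun ![U, Y, Z] ℙ)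
    (hU : Measure.map U ℙ = gaussianReal 0 φ₁.toNNReal)
    (hY : Measure.map Y ℙ = gaussianReal (α * φ₃) φ₃.toNNReal)
    (hZ : Measure.map Z ℙ = gaussianReal (α * φ₄) φ₄.toNNReal) (hα : 0 ≤ α) :
    ℙ {ω | |Y ω| / √φ₃ ≤ |U ω + Y ω + Z ω| / √(φ₁ + φ₃ + φ₄)}
      ≤ ENNReal.ofReal (exp (-κ * α ^ 2 / 12)) := by
  set s := √φ₃
  set T := √(φ₁ + φ₃ + φ₄)
  have hs : 0 < s := sqrt_pos.2 (by linarith)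
  have hT : 0 < T := sqrt_pos.2 (by linarith)
  have h_tail (ε : ℝ) (hε : ε = 1 ∨ ε = -1) :=
    measure_comparison_halfspace_le hε hκ hφ₁ hφ₃ hφ₄0 hφ₄ hUm hYm hZm hindep hU hY hZ hα
  calc ℙ {ω | |Y ω| / s ≤ |U ω + Y ω + Z ω| / T}
      ≤ ℙ ({ω | T * Y ω + s * (U ω + Y ω + Z ω) ≤ 0}
          ∪ {ω | T * Y ω - s * (U ω + Y ω + Z ω) ≤ 0}) :=
        measure_mono fun ω ↦ add_nonpos_or_sub_nonpos_of_abs_div_le hs hT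
    _ ≤ ℙ {ω | T * Y ω + s * (U ω + Y ω + Z ω) ≤ 0}
          + ℙ {ω | T * Y ω - s * (U ω + Y ω + Z ω) ≤ 0} := measure_union_le _ _
    _ ≤ ENNReal.ofReal (exp (-κ * α ^ 2 / 12) / 2) + ENNReal.ofReal (exp (-κ * α ^ 2 / 12) / 2) :=
        add_le_add (by simpa using h_tail 1 (Or.inl rfl))
          (by simpa [← sub_eq_add_neg] using h_tail (-1) (Or.inr rfl))
    _ = ENNReal.ofReal (exp (-κ * α ^ 2 / 12)) := by
        rw [← ENNReal.ofReal_add (by positivity) (by positivity), add_halves]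

end

/-- Let `κ > 0`, `φ₁ ≥ 4κ`, `φ₃ ≥ 4κ`, `0 ≤ φ₄ ≤ κ` and `α ∈ ℝ`.  Let
`U ~ N(0, φ₁)`, `Y ~ N(αφ₃, φ₃)` and `Z ~ N(αφ₄, φ₄)` be independent.  Then
`P(|U + Y + Z|/√(φ₁+φ₃+φ₄) ≥ |Y|/√φ₃) ≤ exp(-κα²/12)`. -/
theorem normal_comparison_b
    {Ω : Type*} [MeasureSpace Ω] [IsProbabilityMeasure (ℙ : Measure Ω)]
    (κ φ₁ φ₃ φ₄ α : ℝ) (hκ : 0 < κ) (hφ₁ : 4 * κ ≤ φ₁) (hφ₃ : 4 * κ ≤ φ₃)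
    (hφ₄0 : 0 ≤ φ₄) (hφ₄ : φ₄ ≤ κ)
    (U Y Z : Ω → ℝ) (hUm : Measurable U) (hYm : Measurable Y) (hZm : Measurable Z)
    (hindep : iIndepFun ![U, Y, Z] ℙ)
    (hU : Measure.map U ℙ = gaussianReal 0 φ₁.toNNReal)
    (hY : Measure.map Y ℙ = gaussianReal (α * φ₃) φ₃.toNNReal)
    (hZ : Measure.map Z ℙ = gaussianReal (α * φ₄) φ₄.toNNReal) :
    ℙ {ω | |Y ω| / Real.sqrt φ₃ ≤ |U ω + Y ω + Z ω| / Real.sqrt (φ₁ + φ₃ + φ₄)}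
      ≤ ENNReal.ofReal (Real.exp (-κ * α ^ 2 / 12)) := by
  rcases le_total 0 α with hα | hα
  · exact normal_comparison_of_nonneg hκ hφ₁ hφ₃ hφ₄0 hφ₄ hUm hYm hZm hindep hU hY hZ hα
  have h_indep_neg : iIndepFun ![-U, -Y, -Z] ℙ := by
    convert hindep.comp (fun _ x ↦ -x) fun _ ↦ measurable_neg using 1
    ext i
    fin_cases i <;> rfl
  have h_neg := normal_comparison_of_nonneg (α := -α) hκ hφ₁ hφ₃ hφ₄0 hφ₄
    hUm.neg hYm.neg hZm.neg h_indep_neg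
    (by simpa using (gaussianReal_neg ⟨hUm.aemeasurable, hU⟩).map_eq)
    (by simpa using (gaussianReal_neg ⟨hYm.aemeasurable, hY⟩).map_eq)
    (by simpa using (gaussianReal_neg ⟨hZm.aemeasurable, hZ⟩).map_eq) (neg_nonneg.2 hα)
  simpa only [Pi.neg_apply, ← neg_add, abs_neg, neg_sq] using h_neg
end

section
/- Define w₁(φ₁, φ₂, φ₃) := ((φ₁ + φ₃)/φ₃²) · ( 1 + (√(φ₂ + φ₃) + √(φ₁ + φ₃))² / (φ₂ − φ₁) ) for reals with 0 ≤ φ₁ < φ₂ and φ₃ > 0. Then w₁ is monotone in each argument on this domain: (i) if φ₁ ≤ φ₁′ < φ₂ then w₁(φ₁, φ₂, φ₃) ≤ w₁(φ₁′, φ₂, φ₃); (ii) if φ₁ < φ₂ ≤ φ₂′ then w₁(φ₁, φ₂′, φ₃) ≤ w₁(φ₁, φ₂, φ₃); (iii) if 0 < φ₃ ≤ φ₃′ then w₁(φ₁, φ₂, φ₃′) ≤ w₁(φ₁, φ₂, φ₃). -/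
/-!
With `a = φ₁ + φ₃` and `b = φ₂ + φ₃` we have `b - a = φ₂ - φ₁ = (√b - √a)(√b + √a)`, so
`w₁ = (a / φ₃²) · 2 / (1 - √(a / b))`; both factors grow with `φ₁` and neither grows with `φ₂`.
In `φ₃` the two factors move in opposite directions, so we rescale instead: with
`u = 1 + φ₁ / φ₃` and `v = 1 + φ₂ / φ₃` one gets `w₁ = 2 u (v + √(u v)) / (φ₂ - φ₁)`, where
`u` and `v` decrease in `φ₃` while `φ₂ - φ₁` does not depend on it.
-/

/-- `w₁(φ₁, φ₂, φ₃) = ((φ₁+φ₃)/φ₃²)(1 + (√(φ₂+φ₃) + √(φ₁+φ₃))²/(φ₂-φ₁))`. -/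
noncomputable def w1 (φ₁ φ₂ φ₃ : ℝ) : ℝ :=
  (φ₁ + φ₃) / φ₃ ^ 2 *
    (1 + (Real.sqrt (φ₂ + φ₃) + Real.sqrt (φ₁ + φ₃)) ^ 2 / (φ₂ - φ₁))

open Real

lemma sqrt_div_lt_one {a b : ℝ} (ha : 0 ≤ a) (hab : a < b) : √(a / b) < 1 :=
  (sqrt_lt' one_pos).mpr (by rw [one_pow]; exact (div_lt_one (ha.trans_lt hab)).mpr hab)

lemma one_add_sq_sqrt_add_sqrt_div_sub {a b : ℝ} (ha : 0 ≤ a) (hb : 0 ≤ b) (hab : a ≠ b) :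
    1 + (√b + √a) ^ 2 / (b - a) = 2 * (b + √(a * b)) / (b - a) := by
  have : b - a ≠ 0 := sub_ne_zero.mpr hab.symm
  rw [add_sq, sq_sqrt hb, sq_sqrt ha, sqrt_mul ha]
  field_simp
  ring

lemma one_add_sq_sqrt_add_sqrt_div_sub_eq_two_div {a b : ℝ} (ha : 0 ≤ a) (hab : a < b) :
    1 + (√b + √a) ^ 2 / (b - a) = 2 / (1 - √(a / b)) := by
  have hb : 0 < √b := sqrt_pos.mpr (ha.trans_lt hab)
  have hdiff : b - a = (√b - √a) * (√b + √a) := by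
    linear_combination sq_sqrt ha - sq_sqrt (ha.trans hab.le)
  have : √b - √a ≠ 0 := (sub_pos.mpr (sqrt_lt_sqrt ha hab)).ne'
  have : √b + √a ≠ 0 := by positivity
  rw [sqrt_div ha, hdiff]
  field_simp
  ring

lemma w1_eq_mul_two_div_one_sub_sqrt {φ₁ φ₂ φ₃ : ℝ} (h₀ : 0 ≤ φ₁ + φ₃) (hφ₁₂ : φ₁ < φ₂) :
    w1 φ₁ φ₂ φ₃ = (φ₁ + φ₃) / φ₃ ^ 2 * (2 / (1 - √((φ₁ + φ₃) / (φ₂ + φ₃)))) := by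
  rw [w1, show φ₂ - φ₁ = φ₂ + φ₃ - (φ₁ + φ₃) by ring,
    one_add_sq_sqrt_add_sqrt_div_sub_eq_two_div h₀ (by linarith)]

lemma w1_eq_two_mul_div_sub {φ₁ φ₂ φ₃ : ℝ} (h₀ : 0 ≤ φ₁ + φ₃) (hφ₁₂ : φ₁ < φ₂) (hφ₃ : 0 < φ₃) :
    w1 φ₁ φ₂ φ₃ =
      2 * ((1 + φ₁ / φ₃) * (1 + φ₂ / φ₃ + √((1 + φ₁ / φ₃) * (1 + φ₂ / φ₃)))) / (φ₂ - φ₁) := by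
  have hu : 1 + φ₁ / φ₃ = (φ₁ + φ₃) / φ₃ := by field_simp; ring
  have hv : 1 + φ₂ / φ₃ = (φ₂ + φ₃) / φ₃ := by field_simp; ring
  have hsqrt : √((φ₁ + φ₃) / φ₃ * ((φ₂ + φ₃) / φ₃)) = √((φ₁ + φ₃) * (φ₂ + φ₃)) / φ₃ := by
    rw [div_mul_div_comm, ← sq, sqrt_div' _ (sq_nonneg φ₃), sqrt_sq hφ₃.le]
  rw [w1, show φ₂ - φ₁ = φ₂ + φ₃ - (φ₁ + φ₃) by ring,
    one_add_sq_sqrt_add_sqrt_div_sub h₀ (by linarith) (by linarith), hu, hv, hsqrt]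
  field_simp

lemma w1_mono_left {φ₁ φ₁' φ₂ φ₃ : ℝ} (h₀ : 0 ≤ φ₁ + φ₃) (h : φ₁ ≤ φ₁') (h' : φ₁' < φ₂) :
    w1 φ₁ φ₂ φ₃ ≤ w1 φ₁' φ₂ φ₃ := by
  have hs : 0 < 1 - √((φ₁ + φ₃) / (φ₂ + φ₃)) := sub_pos.mpr (sqrt_div_lt_one h₀ (by linarith))
  have hs' : 0 < 1 - √((φ₁' + φ₃) / (φ₂ + φ₃)) :=
    sub_pos.mpr (sqrt_div_lt_one (by linarith) (by linarith))
  have : 0 ≤ φ₁' + φ₃ := by linarith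
  rw [w1_eq_mul_two_div_one_sub_sqrt h₀ (h.trans_lt h'), w1_eq_mul_two_div_one_sub_sqrt this h']
  gcongr
  linarith

lemma w1_anti_middle {φ₁ φ₂ φ₂' φ₃ : ℝ} (h₀ : 0 ≤ φ₁ + φ₃) (hφ₁₂ : φ₁ < φ₂) (h : φ₂ ≤ φ₂') :
    w1 φ₁ φ₂' φ₃ ≤ w1 φ₁ φ₂ φ₃ := by
  have hs : 0 < 1 - √((φ₁ + φ₃) / (φ₂ + φ₃)) := sub_pos.mpr (sqrt_div_lt_one h₀ (by linarith))
  have : 0 < φ₂ + φ₃ := by linarith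
  rw [w1_eq_mul_two_div_one_sub_sqrt h₀ hφ₁₂, w1_eq_mul_two_div_one_sub_sqrt h₀ (by linarith)]
  gcongr

lemma w1_anti_right {φ₁ φ₂ φ₃ φ₃' : ℝ} (hφ₁ : 0 ≤ φ₁) (hφ₁₂ : φ₁ < φ₂) (hφ₃ : 0 < φ₃)
    (h : φ₃ ≤ φ₃') : w1 φ₁ φ₂ φ₃' ≤ w1 φ₁ φ₂ φ₃ := by
  have : 0 < φ₃' := hφ₃.trans_le h
  have : 0 ≤ φ₂ := by linarith
  have : 0 < φ₂ - φ₁ := by linarith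
  rw [w1_eq_two_mul_div_sub (by positivity) hφ₁₂ hφ₃,
    w1_eq_two_mul_div_sub (by positivity) hφ₁₂ (by positivity)]
  gcongr

/-- On the domain `0 ≤ φ₁ < φ₂`, `φ₃ > 0`, the quantity `w₁` is nondecreasing in `φ₁`
and nonincreasing in each of `φ₂` and `φ₃`. -/
theorem w1_monotone (φ₁ φ₂ φ₃ : ℝ) (hφ₁ : 0 ≤ φ₁) (hφ₁₂ : φ₁ < φ₂) (hφ₃ : 0 < φ₃) :
    (∀ φ₁' : ℝ, φ₁ ≤ φ₁' → φ₁' < φ₂ → w1 φ₁ φ₂ φ₃ ≤ w1 φ₁' φ₂ φ₃) ∧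
    (∀ φ₂' : ℝ, φ₂ ≤ φ₂' → w1 φ₁ φ₂' φ₃ ≤ w1 φ₁ φ₂ φ₃) ∧
    (∀ φ₃' : ℝ, φ₃ ≤ φ₃' → w1 φ₁ φ₂ φ₃' ≤ w1 φ₁ φ₂ φ₃) := by
  have h₀ : 0 ≤ φ₁ + φ₃ := by positivity
  exact ⟨fun _ h h' => w1_mono_left h₀ h h', fun _ h => w1_anti_middle h₀ hφ₁₂ h,
    fun _ h => w1_anti_right hφ₁ hφ₁₂ hφ₃ h⟩
end

section
/- Let κ > 0 and let φ₁, φ₃, φ₄ be reals with φ₁ ≥ 4κ, φ₃ ≥ 4κ and 0 ≤ φ₄ ≤ κ. Then √(φ₃·(φ₁ + φ₃ + φ₄)) > φ₃ + φ₄, and ( (√(φ₁ + φ₃ + φ₄) − √φ₃)² + φ₁ + φ₄ ) / ( √(φ₃·(φ₁ + φ₃ + φ₄)) − φ₃ − φ₄ )² ≤ 6/κ. -/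
/-!
Write `a = √(φ₁ + φ₃ + φ₄)` and `b = √φ₃`. Since `φ₁ + φ₄ = a² - b²`, the numerator is `2a(a - b)`
and the denominator is `(b(a - b) - φ₄)²`, so the claim becomes the polynomial inequality
`a(a - b)κ ≤ 3(b(a - b) - φ₄)²` under `4κ ≤ b²`, `4κ + φ₄ ≤ a² - b²`, `0 ≤ φ₄ ≤ κ`.
It is sharp at `φ₁ = φ₃ = 4κ`, `φ₄ = κ`, i.e. `a = 3b/2`, which is where the proof splits into cases.
-/

section
variable {a b κ φ : ℝ}

lemma two_mul_le_mul_sub (hb : 0 ≤ b) (hba : b ≤ a) (hφ : φ ≤ κ) (hκb : 4 * κ ≤ b ^ 2)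
    (hκa : 4 * κ + φ ≤ a ^ 2 - b ^ 2) : 2 * φ ≤ b * (a - b) := by
  rcases le_total (3 * b) (2 * a) with h | h
  · nlinarith [mul_le_mul_of_nonneg_left h hb]
  · nlinarith [mul_le_mul_of_nonneg_left h (sub_nonneg.2 hba)]

lemma mul_le_three_mul_sq (hb : 0 ≤ b) (hba : b ≤ a) (hφ0 : 0 ≤ φ) (hφ : φ ≤ κ)
    (hκb : 4 * κ ≤ b ^ 2) (hκa : 4 * κ + φ ≤ a ^ 2 - b ^ 2) :
    a * (a - b) * κ ≤ 3 * (b * (a - b) - φ) ^ 2 := by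
  have hu := two_mul_le_mul_sub hb hba hφ hκb hκa
  have ht : 0 ≤ a - b := sub_nonneg.2 hba
  have ha : 0 ≤ a := hb.trans hba
  rcases le_total (3 * b) (2 * a) with h | h
  · calc a * (a - b) * κ ≤ a * (a - b) * (b ^ 2 / 4) := by gcongr; linarith
      _ ≤ 3 * (a - b) * (a - b) * (b ^ 2 / 4) := by gcongr; linarith
      _ ≤ 3 * (b * (a - b) - φ) ^ 2 := by nlinarith
  · -- `e` measures the distance of `φ` from its largest admissible value `(a² - b²)/5`.
    set e := (a ^ 2 - b ^ 2) / 5 - φ with he_def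
    have he : 0 ≤ e := by linarith
    have hsos : 12 * (b * (a - b) - φ) ^ 2 - a * (a - b) * (a ^ 2 - b ^ 2 - φ) =
        4 * (a - b) ^ 2 / 25 * (3 * b - 2 * a) * (16 * b + a)
          + e * (a - b) * (96 * b - 29 * a) / 5 + 12 * e ^ 2 := by
      rw [he_def]; ring
    have hsos₁ : 0 ≤ 4 * (a - b) ^ 2 / 25 * (3 * b - 2 * a) * (16 * b + a) := by
      have : 0 ≤ 3 * b - 2 * a := by linarith
      positivity
    have hsos₂ : 0 ≤ e * (a - b) * (96 * b - 29 * a) / 5 := by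
      have : 0 ≤ 96 * b - 29 * a := by linarith
      positivity
    linarith [sq_nonneg e, mul_le_mul_of_nonneg_left (by linarith : 4 * κ ≤ a ^ 2 - b ^ 2 - φ)
      (mul_nonneg ha ht)]

end

/-- Let `κ > 0`, `φ₁ ≥ 4κ`, `φ₃ ≥ 4κ` and `0 ≤ φ₄ ≤ κ`.  Then
`√(φ₃(φ₁+φ₃+φ₄)) > φ₃ + φ₄` and
`((√(φ₁+φ₃+φ₄) - √φ₃)² + φ₁ + φ₄)/(√(φ₃(φ₁+φ₃+φ₄)) - φ₃ - φ₄)² ≤ 6/κ`. -/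
theorem w2_bound (κ φ₁ φ₃ φ₄ : ℝ) (hκ : 0 < κ) (hφ₁ : 4 * κ ≤ φ₁) (hφ₃ : 4 * κ ≤ φ₃)
    (hφ₄0 : 0 ≤ φ₄) (hφ₄ : φ₄ ≤ κ) :
    φ₃ + φ₄ < Real.sqrt (φ₃ * (φ₁ + φ₃ + φ₄)) ∧
    ((Real.sqrt (φ₁ + φ₃ + φ₄) - Real.sqrt φ₃) ^ 2 + φ₁ + φ₄) /
        (Real.sqrt (φ₃ * (φ₁ + φ₃ + φ₄)) - φ₃ - φ₄) ^ 2 ≤ 6 / κ := by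
  set a := Real.sqrt (φ₁ + φ₃ + φ₄)
  set b := Real.sqrt φ₃
  have ha2 : a ^ 2 = φ₁ + φ₃ + φ₄ := Real.sq_sqrt (by linarith)
  have hb2 : b ^ 2 = φ₃ := Real.sq_sqrt (by linarith)
  have hb : 0 < b := Real.sqrt_pos.2 (by linarith)
  have hba : b < a := Real.sqrt_lt_sqrt (by linarith) (by linarith)
  have hκb : 4 * κ ≤ b ^ 2 := hb2 ▸ hφ₃
  have hκa : 4 * κ + φ₄ ≤ a ^ 2 - b ^ 2 := by linarith
  have hden : φ₄ < b * (a - b) := by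
    nlinarith [two_mul_le_mul_sub hb.le hba.le hφ₄ hκb hκa, mul_pos hb (sub_pos.2 hba)]
  rw [Real.sqrt_mul (by linarith),
    show (a - b) ^ 2 + φ₁ + φ₄ = 2 * (a * (a - b)) by linear_combination hb2 - ha2,
    show b * a - φ₃ - φ₄ = b * (a - b) - φ₄ by linear_combination hb2]
  refine ⟨by linear_combination hden - hb2, ?_⟩
  rw [div_le_div_iff₀ (pow_pos (sub_pos.2 hden) 2) hκ]
  linarith [mul_le_three_mul_sq hb.le hba.le hφ₄0 hφ₄ hκb hκa]
end

section
/- Define w₂(φ₁, φ₃, φ₄) := ( (√(φ₁ + φ₃ + φ₄) − √φ₃)² + φ₁ + φ₄ ) / ( √(φ₃·(φ₁ + φ₃ + φ₄)) − φ₃ − φ₄ )² for reals φ₁ ≥ 0, φ₃ > 0, φ₄ ≥ 0 satisfying D(φ₁, φ₃, φ₄) := √(φ₃·(φ₁ + φ₃ + φ₄)) − φ₃ − φ₄ > 0. Then: (i) if φ₁ ≤ φ₁′ and D(φ₁, φ₃, φ₄) > 0, then w₂(φ₁′, φ₃, φ₄) ≤ w₂(φ₁, φ₃, φ₄); (ii)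 if 0 < φ₃ ≤ φ₃′ and D(φ₁, φ₃, φ₄) > 0, then w₂(φ₁, φ₃′, φ₄) ≤ w₂(φ₁, φ₃, φ₄); (iii) if 0 ≤ φ₄ ≤ φ₄′ and D(φ₁, φ₃, φ₄′) > 0, then w₂(φ₁, φ₃, φ₄) ≤ w₂(φ₁, φ₃, φ₄′). -/
/-- `D(φ₁, φ₃, φ₄) = √(φ₃(φ₁+φ₃+φ₄)) - φ₃ - φ₄`. -/
noncomputable def D (φ₁ φ₃ φ₄ : ℝ) : ℝ :=
  Real.sqrt (φ₃ * (φ₁ + φ₃ + φ₄)) - φ₃ - φ₄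

/-- `w₂(φ₁, φ₃, φ₄) = ((√(φ₁+φ₃+φ₄) - √φ₃)² + φ₁ + φ₄)/D(φ₁, φ₃, φ₄)²`. -/
noncomputable def w2 (φ₁ φ₃ φ₄ : ℝ) : ℝ :=
  ((Real.sqrt (φ₁ + φ₃ + φ₄) - Real.sqrt φ₃) ^ 2 + φ₁ + φ₄) / (D φ₁ φ₃ φ₄) ^ 2

/-!
Put `a = √(φ₁ + φ₃ + φ₄)` and `b = √φ₃`. Then `D + φ₄ = b (a - b)`, `D + φ₄ + φ₃ = a b` and the
numerator of `w₂` is `2 a (a - b)`, so `w₂ = 2 (D + φ₄)(D + φ₄ + φ₃) / (φ₃ D²) = 2 r (r / φ₃ + 1 / D)`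
with `r = 1 + φ₄ / D`. This expression is antitone in `φ₃` and in `D` and monotone in `φ₄`, while
`D` itself is monotone in `φ₁` and `φ₃` and antitone in `φ₄`.
-/

open Real

noncomputable def w2OfD (φ₃ φ₄ u : ℝ) : ℝ :=
  2 * (u + φ₄) * (u + φ₄ + φ₃) / (φ₃ * u ^ 2)

theorem w2OfD_le_w2OfD {φ₃ φ₃' φ₄ φ₄' u u' : ℝ} (h₃ : 0 < φ₃) (h₃' : φ₃ ≤ φ₃')
    (h₄ : 0 ≤ φ₄) (h₄' : φ₄ ≤ φ₄') (hu : 0 < u) (hu' : u ≤ u') :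
    w2OfD φ₃' φ₄ u' ≤ w2OfD φ₃ φ₄' u := by
  have hform : ∀ {B q v : ℝ}, 0 < B → 0 < v →
      w2OfD B q v = 2 * (1 + q / v) * ((1 + q / v) / B + 1 / v) := by
    intro B q v hB hv
    unfold w2OfD
    field_simp
  have hφ₃' : 0 < φ₃' := h₃.trans_le h₃'
  have hφ₄' : 0 ≤ φ₄' := h₄.trans h₄'
  have hu'₀ : 0 < u' := hu.trans_le hu'
  rw [hform hφ₃' hu'₀, hform h₃ hu]
  gcongr

theorem w2_eq_w2OfD {φ₁ φ₃ φ₄ : ℝ} (h₃ : 0 < φ₃) (hS : 0 ≤ φ₁ + φ₃ + φ₄) :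
    w2 φ₁ φ₃ φ₄ = w2OfD φ₃ φ₄ (D φ₁ φ₃ φ₄) := by
  have ha := sq_sqrt hS
  have hb := sq_sqrt h₃.le
  have hD : D φ₁ φ₃ φ₄ = √φ₃ * √(φ₁ + φ₃ + φ₄) - φ₃ - φ₄ := by rw [D, sqrt_mul h₃.le]
  have hnum : (√(φ₁ + φ₃ + φ₄) - √φ₃) ^ 2 + φ₁ + φ₄
      = 2 * (D φ₁ φ₃ φ₄ + φ₄) * (D φ₁ φ₃ φ₄ + φ₄ + φ₃) / φ₃ := by
    rw [eq_div_iff h₃.ne', hD]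
    linear_combination (-φ₃) * ha + (φ₃ - 2 * √(φ₁ + φ₃ + φ₄) ^ 2) * hb
  rw [w2, w2OfD, hnum, div_div]

theorem D_mono_left {φ₁ φ₁' φ₃ φ₄ : ℝ} (h₃ : 0 ≤ φ₃) (h₁ : φ₁ ≤ φ₁') :
    D φ₁ φ₃ φ₄ ≤ D φ₁' φ₃ φ₄ := by
  unfold D
  gcongr

theorem D_mono_mid {φ₁ φ₃ φ₃' φ₄ : ℝ} (h₃ : 0 ≤ φ₃) (hS : 0 ≤ φ₁ + φ₃ + φ₄) (h₃' : φ₃ ≤ φ₃') :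
    D φ₁ φ₃ φ₄ ≤ D φ₁ φ₃' φ₄ := by
  set S := φ₁ + φ₃ + φ₄
  have hx := sq_sqrt (mul_nonneg h₃ hS)
  have amgm : 2 * √(φ₃ * S) ≤ φ₃ + S := by
    simpa [sqrt_mul h₃, sq_sqrt h₃, sq_sqrt hS, mul_assoc] using two_mul_le_add_sq √φ₃ √S
  have key : √(φ₃ * S) + (φ₃' - φ₃) ≤ √(φ₃' * (φ₁ + φ₃' + φ₄)) := by
    apply le_sqrt_of_sq_le
    nlinarith [mul_le_mul_of_nonneg_left amgm (sub_nonneg.2 h₃')]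
  unfold D
  linarith

theorem D_anti_right {φ₁ φ₃ φ₄ φ₄' : ℝ} (h₃ : 0 ≤ φ₃) (h₁₄ : 0 ≤ φ₁ + φ₄) (h₄' : φ₄ ≤ φ₄') :
    D φ₁ φ₃ φ₄' ≤ D φ₁ φ₃ φ₄ := by
  set S := φ₁ + φ₃ + φ₄
  have hx := sq_sqrt (mul_nonneg h₃ (show 0 ≤ S by linarith))
  have hφ₃x : φ₃ ≤ √(φ₃ * S) := le_sqrt_of_sq_le (by nlinarith)
  have key : √(φ₃ * (φ₁ + φ₃ + φ₄')) ≤ √(φ₃ * S) + (φ₄' - φ₄) := by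
    rw [sqrt_le_left (by positivity)]
    nlinarith [mul_le_mul_of_nonneg_left hφ₃x (sub_nonneg.2 h₄')]
  unfold D
  linarith

/-- On the domain `φ₁ ≥ 0`, `φ₃ > 0`, `φ₄ ≥ 0`, `D(φ₁, φ₃, φ₄) > 0`, the quantity `w₂`
is nonincreasing in each of `φ₁` and `φ₃`, and nondecreasing in `φ₄`. -/
theorem w2_monotone :
    (∀ φ₁ φ₁' φ₃ φ₄ : ℝ, 0 ≤ φ₁ → 0 < φ₃ → 0 ≤ φ₄ → φ₁ ≤ φ₁' → 0 < D φ₁ φ₃ φ₄ →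
      w2 φ₁' φ₃ φ₄ ≤ w2 φ₁ φ₃ φ₄) ∧
    (∀ φ₁ φ₃ φ₃' φ₄ : ℝ, 0 ≤ φ₁ → 0 < φ₃ → 0 ≤ φ₄ → φ₃ ≤ φ₃' → 0 < D φ₁ φ₃ φ₄ →
      w2 φ₁ φ₃' φ₄ ≤ w2 φ₁ φ₃ φ₄) ∧
    (∀ φ₁ φ₃ φ₄ φ₄' : ℝ, 0 ≤ φ₁ → 0 < φ₃ → 0 ≤ φ₄ → φ₄ ≤ φ₄' → 0 < D φ₁ φ₃ φ₄' →
      w2 φ₁ φ₃ φ₄ ≤ w2 φ₁ φ₃ φ₄') := by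
  refine ⟨?_, ?_, ?_⟩
  · intro φ₁ φ₁' φ₃ φ₄ h₁ h₃ h₄ h₁' hD
    rw [w2_eq_w2OfD h₃ (by linarith), w2_eq_w2OfD h₃ (by linarith)]
    exact w2OfD_le_w2OfD h₃ le_rfl h₄ le_rfl hD (D_mono_left h₃.le h₁')
  · intro φ₁ φ₃ φ₃' φ₄ h₁ h₃ h₄ h₃' hD
    rw [w2_eq_w2OfD (h₃.trans_le h₃') (by linarith), w2_eq_w2OfD h₃ (by linarith)]
    exact w2OfD_le_w2OfD h₃ h₃' h₄ le_rfl hD (D_mono_mid h₃.le (by linarith) h₃')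
  · intro φ₁ φ₃ φ₄ φ₄' h₁ h₃ h₄ h₄' hD
    rw [w2_eq_w2OfD h₃ (by linarith), w2_eq_w2OfD h₃ (by linarith)]
    exact w2OfD_le_w2OfD h₃ le_rfl h₄ h₄' hD (D_anti_right h₃.le (by linarith) h₄')
end

section
/- For every p ∈ ℕ with p ≥ 1 and every nonzero θ ∈ ℝ^p, there exists s ∈ {2⁰, 2¹, …, 2^{⌊log₂ p⌋}} such that the set {j ∈ {1,…,p} : |θ^j| ≥ ‖θ‖₂ / √(s·log₂(2p))} has cardinality at least s. In particular, the effective sparsity s(θ) is well defined. -/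
/-!
Put `c = ‖θ‖₂² / log₂(2p)` and `K = ⌊log₂ p⌋`, and suppose every level set
`A_i = {j : θ_j² ≥ c / 2^i}`, `i ≤ K`, has fewer than `2^i` elements. Every `x < c` satisfies
`x < c / 2^K + ∑_{1 ≤ i ≤ K, x ∈ A_i} c / 2^i`, so summing over `j` gives
`‖θ‖₂² < p c / 2^K + ∑_{i=1}^K (2^i - 1) c / 2^i ≤ (K + 1) c ≤ ‖θ‖₂²`, using `p < 2^(K+1)`
and `K + 1 ≤ log₂(2p)`.
-/

open Finset

lemma lt_div_two_pow_add_sum_dyadic_levels {c x : ℝ} (hc : 0 ≤ c) (hx : x < c) (K : ℕ) :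
    x < c / 2 ^ K + ∑ i ∈ range K, if c / 2 ^ (i + 1) ≤ x then c / 2 ^ (i + 1) else 0 := by
  induction K with
  | zero => simpa using hx
  | succ K ih =>
    rw [sum_range_succ]
    split_ifs with hx_level
    · -- `c / 2^K = 2 * (c / 2^(K+1))`, so the new level exactly replaces the old tail term
      convert ih using 1
      rw [pow_succ]
      ring
    · have : 0 ≤ ∑ i ∈ range K, if c / 2 ^ (i + 1) ≤ x then c / 2 ^ (i + 1) else 0 :=
        sum_nonneg fun i _ => by positivity
      linarith

lemma pow_succ_sub_one_div_pow_add_sum_range (K : ℕ) :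
    ((2 : ℝ) ^ (K + 1) - 1) / 2 ^ K + ∑ i ∈ range K, ((2 : ℝ) ^ (i + 1) - 1) / 2 ^ (i + 1)
      = K + 1 := by
  induction K with
  | zero => norm_num
  | succ K ih =>
    rw [sum_range_succ, Nat.cast_succ, ← ih]
    field_simp
    ring

lemma sum_lt_of_card_superlevel_lt {ι : Type*} {s : Finset ι} (hs : s.Nonempty) (f : ι → ℝ)
    {c : ℝ} (hc : 0 ≤ c) {K : ℕ} (hsK : #s < 2 ^ (K + 1))
    (hlevel : ∀ i ≤ K, #{j ∈ s | c / 2 ^ i ≤ f j} < 2 ^ i) :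
    ∑ j ∈ s, f j < (K + 1) * c := by
  have hf : ∀ j ∈ s, f j < c := by
    have := hlevel 0 K.zero_le
    simp only [pow_zero, Nat.lt_one_iff, card_eq_zero, filter_eq_empty_iff, div_one,
      not_le] at this
    exact this
  have hlevel_real : ∀ i < K, (#{j ∈ s | c / 2 ^ (i + 1) ≤ f j} : ℝ) ≤ 2 ^ (i + 1) - 1 := by
    intro i hi
    have : (#{j ∈ s | c / 2 ^ (i + 1) ≤ f j} : ℝ) + 1 ≤ 2 ^ (i + 1) := by
      exact_mod_cast hlevel (i + 1) hi
    linarith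
  have hs_real : (#s : ℝ) ≤ 2 ^ (K + 1) - 1 := by
    have : (#s : ℝ) + 1 ≤ 2 ^ (K + 1) := by exact_mod_cast hsK
    linarith
  calc ∑ j ∈ s, f j
      < ∑ j ∈ s, (c / 2 ^ K + ∑ i ∈ range K,
          if c / 2 ^ (i + 1) ≤ f j then c / 2 ^ (i + 1) else 0) :=
        sum_lt_sum_of_nonempty hs fun j hj =>
          lt_div_two_pow_add_sum_dyadic_levels hc (hf j hj) K
    _ = #s * (c / 2 ^ K) + ∑ i ∈ range K, #{j ∈ s | c / 2 ^ (i + 1) ≤ f j} * (c / 2 ^ (i + 1)) := by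
        rw [sum_add_distrib, sum_const, nsmul_eq_mul, sum_comm]
        simp only [← sum_filter, sum_const, nsmul_eq_mul]
    _ ≤ (2 ^ (K + 1) - 1) * (c / 2 ^ K) + ∑ i ∈ range K, (2 ^ (i + 1) - 1) * (c / 2 ^ (i + 1)) := by
        gcongr with i hi
        exact hlevel_real i (mem_range.mp hi)
    _ = ((2 ^ (K + 1) - 1) / 2 ^ K + ∑ i ∈ range K, (2 ^ (i + 1) - 1) / 2 ^ (i + 1)) * c := by
        rw [add_mul, sum_mul]
        congr 1
        · ring
        · exact sum_congr rfl fun i _ => by ring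
    _ = (K + 1) * c := by rw [pow_succ_sub_one_div_pow_add_sum_range]

lemma sqrt_div_sqrt_le_abs_iff {a b : ℝ} (x : ℝ) (hb : 0 ≤ b) :
    √a / √b ≤ |x| ↔ a / b ≤ x ^ 2 := by
  rw [← Real.sqrt_div' a hb, ← Real.sqrt_sq_eq_abs, Real.sqrt_le_sqrt_iff (sq_nonneg x)]

lemma natLog_add_one_le_logb_two_mul {p : ℕ} (hp : p ≠ 0) :
    (Nat.log 2 p : ℝ) + 1 ≤ Real.logb 2 (2 * p) := by
  have := Real.natLog_le_logb (p * 2) 2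
  rw [Nat.log_mul_base one_lt_two hp] at this
  push_cast at this
  rwa [mul_comm]

theorem effective_sparsity_exists_general (p : ℕ) (θ : Fin p → ℝ) (hθ : θ ≠ 0) :
    ∃ i : ℕ, i ≤ Nat.log 2 p ∧
      2 ^ i ≤ (Finset.univ.filter (fun j : Fin p =>
        Real.sqrt (∑ k, θ k ^ 2) / Real.sqrt ((2 : ℝ) ^ i * Real.logb 2 (2 * p))
          ≤ |θ j|)).card := by
  obtain ⟨j₀, hj₀⟩ : ∃ j, θ j ≠ 0 := Function.ne_iff.mp hθ
  have hp : p ≠ 0 := Fin.pos j₀ |>.ne'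
  set K := Nat.log 2 p
  set L := Real.logb 2 (2 * p)
  set T := ∑ k, θ k ^ 2
  have hT : 0 < T := sum_pos' (fun k _ => sq_nonneg _) ⟨j₀, mem_univ _, by positivity⟩
  have hKL : (K : ℝ) + 1 ≤ L := natLog_add_one_le_logb_two_mul hp
  have hL : 0 < L := by linarith [K.cast_nonneg (α := ℝ)]
  by_contra! hsmall
  have hlevel : ∀ i ≤ K, #{j | T / L / 2 ^ i ≤ θ j ^ 2} < 2 ^ i := by
    intro i hi
    have hiff : ∀ j, √T / √(2 ^ i * L) ≤ |θ j| ↔ T / L / 2 ^ i ≤ θ j ^ 2 := fun j => by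
      rw [sqrt_div_sqrt_le_abs_iff _ (by positivity), div_div, mul_comm L]
    simpa only [hiff] using hsmall i hi
  have hsum := sum_lt_of_card_superlevel_lt ⟨j₀, mem_univ _⟩ (θ · ^ 2) (by positivity)
    (by simpa using Nat.lt_pow_succ_log_self one_lt_two p) hlevel
  have hbound : (K + 1) * (T / L) ≤ T := by
    rw [mul_div_assoc', div_le_iff₀ hL, mul_comm T]
    exact mul_le_mul_of_nonneg_right hKL hT.le
  exact lt_irrefl T (hsum.trans_le hbound)

/-- For every `p ≥ 1` and nonzero `θ ∈ ℝ^p`, there exists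
`s ∈ {2⁰, 2¹, …, 2^⌊log₂ p⌋}` (i.e. `s = 2^i` with `i ≤ Nat.log 2 p`) such that
`#{j : |θ^j| ≥ ‖θ‖₂/√(s log₂(2p))} ≥ s`; hence the effective sparsity is well defined. -/
theorem effective_sparsity_exists (p : ℕ) (hp : 1 ≤ p) (θ : Fin p → ℝ) (hθ : θ ≠ 0) :
    ∃ i : ℕ, i ≤ Nat.log 2 p ∧
      2 ^ i ≤ (Finset.univ.filter (fun j : Fin p =>
        Real.sqrt (∑ k, θ k ^ 2) / Real.sqrt ((2 : ℝ) ^ i * Real.logb 2 (2 * p))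
          ≤ |θ j|)).card :=
  effective_sparsity_exists_general p θ hθ
end

section
/- Let p ∈ ℕ, let θ ∈ ℝ^p be nonzero, and suppose θ has at most k nonzero coordinates, where k ≥ 1. Then there exists s ∈ {2^i : i ∈ ℕ₀, 2^i ≤ k} such that the set {j ∈ {1,…,p} : |θ^j| ≥ ‖θ‖₂ / √(s·log₂(2p))} has cardinality at least s. Consequently the effective sparsity satisfies s(θ) ≤ k. -/
/-!
If every level `i ≤ m = ⌊log₂ ‖θ‖₀⌋` had fewer than `2^i` coordinates with
`θ_j² ≥ c / 2^i`, where `c = ‖θ‖₂² / log₂(2p)`, then a layer-cake decomposition of each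
`θ_j²` along the thresholds `c / 2^i` would bound `‖θ‖₂²` strictly by `(m + 1) c`.
Since `2^(m+1) ≤ 2p`, this is at most `‖θ‖₂²`, a contradiction.
-/

open Finset

theorem lt_add_sum_ite_of_antitone {t : ℕ → ℝ} (ht : Antitone t) {v : ℝ} (hv : v < t 0)
    (m : ℕ) : v < t m + ∑ i ∈ range m, if t (i + 1) ≤ v then t i - t (i + 1) else 0 := by
  induction m with
  | zero => simpa using hv
  | succ m ih =>
    rw [sum_range_succ]
    split_ifs with hm
    · linarith
    · have : 0 ≤ ∑ i ∈ range m, if t (i + 1) ≤ v then t i - t (i + 1) else 0 :=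
        sum_nonneg fun i _ => by split_ifs <;> linarith [ht (Nat.le_succ i)]
      linarith

theorem sum_range_div_two_pow_succ (c : ℝ) (m : ℕ) :
    ∑ i ∈ range m, c / 2 ^ (i + 1) = c - c / 2 ^ m := by
  induction m with
  | zero => simp
  | succ m ih => rw [sum_range_succ, ih]; field_simp; ring

theorem exists_two_pow_le_card_filter_div_two_pow_le {ι : Type*} {s : Finset ι} (f : ι → ℝ)
    {c : ℝ} (hc : 0 ≤ c) (hs : s.Nonempty) {m : ℕ} (hcard : #s < 2 ^ (m + 1))
    (hsum : (m + 1) * c ≤ ∑ j ∈ s, f j) :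
    ∃ i ≤ m, 2 ^ i ≤ #{j ∈ s | c / 2 ^ i ≤ f j} := by
  by_contra! hsmall
  set t : ℕ → ℝ := fun i => c / 2 ^ i
  have ht : Antitone t := fun i i' h => div_le_div_of_nonneg_left hc (by positivity)
    (pow_le_pow_right₀ (by norm_num) h)
  have hgap (i : ℕ) : t i - t (i + 1) = c / 2 ^ (i + 1) := by simp only [t]; field_simp; ring
  have hlt_c : ∀ j ∈ s, f j < t 0 := by
    have h0 : #{j ∈ s | t 0 ≤ f j} < 1 := hsmall 0 m.zero_le
    rw [Nat.lt_one_iff, card_eq_zero, filter_eq_empty_iff] at h0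
    exact fun j hj => lt_of_not_ge (h0 hj)
  have hlevel (i : ℕ) (hi : i < m) :
      (#{j ∈ s | t (i + 1) ≤ f j} : ℝ) * (t i - t (i + 1)) ≤ c - c / 2 ^ (i + 1) := by
    have hle : #{j ∈ s | t (i + 1) ≤ f j} + 1 ≤ 2 ^ (i + 1) := hsmall (i + 1) hi
    have hle' : (#{j ∈ s | t (i + 1) ≤ f j} : ℝ) + 1 ≤ 2 ^ (i + 1) := by exact_mod_cast hle
    rw [hgap]
    calc _ ≤ ((2 : ℝ) ^ (i + 1) - 1) * (c / 2 ^ (i + 1)) := by gcongr; linarith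
      _ = c - c / 2 ^ (i + 1) := by field_simp
  have hs_le : (#s : ℝ) + 1 ≤ 2 * 2 ^ m := by rw [← pow_succ']; exact_mod_cast hcard
  have : ∑ j ∈ s, f j < (m + 1) * c := calc
    ∑ j ∈ s, f j
      < ∑ j ∈ s, (t m + ∑ i ∈ range m, if t (i + 1) ≤ f j then t i - t (i + 1) else 0) :=
        sum_lt_sum_of_nonempty hs fun j hj => lt_add_sum_ite_of_antitone ht (hlt_c j hj) m
    _ = #s * t m + ∑ i ∈ range m, (#{j ∈ s | t (i + 1) ≤ f j} : ℝ) * (t i - t (i + 1)) := by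
        rw [sum_add_distrib, sum_const, nsmul_eq_mul, sum_comm]
        simp only [← sum_filter, sum_const, nsmul_eq_mul]
    _ ≤ #s * (c / 2 ^ m) + ∑ i ∈ range m, (c - c / 2 ^ (i + 1)) :=
        add_le_add le_rfl (sum_le_sum fun i hi => hlevel i (mem_range.mp hi))
    _ = (#s + 1) * (c / 2 ^ m) + (m - 1) * c := by
        rw [sum_sub_distrib, sum_range_div_two_pow_succ, sum_const, card_range, nsmul_eq_mul]
        ring
    _ ≤ 2 * 2 ^ m * (c / 2 ^ m) + (m - 1) * c := by gcongr
    _ = (m + 1) * c := by field_simp; ring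
  linarith

theorem effective_sparsity_le_sparsity_general (p k : ℕ) (θ : Fin p → ℝ) (hθ : θ ≠ 0)
    (hsparse : (Finset.univ.filter (fun j : Fin p => θ j ≠ 0)).card ≤ k) :
    ∃ i : ℕ, 2 ^ i ≤ k ∧
      2 ^ i ≤ (Finset.univ.filter (fun j : Fin p =>
        Real.sqrt (∑ l, θ l ^ 2) / Real.sqrt ((2 : ℝ) ^ i * Real.logb 2 (2 * p))
          ≤ |θ j|)).card := by
  set N := univ.filter fun j => θ j ≠ 0
  set Q := ∑ l, θ l ^ 2
  set L := Real.logb 2 (2 * p)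
  set m := Nat.log 2 #N
  have hN : N.Nonempty := by
    obtain ⟨j, hj⟩ := Function.ne_iff.mp hθ
    exact ⟨j, mem_filter.mpr ⟨mem_univ j, hj⟩⟩
  have hNQ : ∑ j ∈ N, θ j ^ 2 = Q :=
    sum_filter_of_ne fun j _ h hj => h (by rw [hj, sq, zero_mul])
  have hNp : #N ≤ p := (card_filter_le _ _).trans (card_fin p).le
  have hmL : (m + 1 : ℝ) ≤ L := by
    have h2m : 2 ^ (m + 1) ≤ 2 * p := by
      rw [pow_succ']
      exact Nat.mul_le_mul_left 2 ((Nat.pow_log_le_self 2 hN.card_pos.ne').trans hNp)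
    have hp : (0 : ℝ) < p := Nat.cast_pos.mpr (hN.card_pos.trans_le hNp)
    rw [Real.le_logb_iff_rpow_le one_lt_two (by positivity)]
    exact_mod_cast h2m
  have hL : 0 < L := by linarith
  obtain ⟨i, him, hi⟩ :=
    exists_two_pow_le_card_filter_div_two_pow_le (fun j => θ j ^ 2) (c := Q / L)
    (div_nonneg (sum_nonneg fun j _ => sq_nonneg (θ j)) hL.le) hN
    (Nat.lt_pow_succ_log_self one_lt_two #N)
    (by rw [hNQ, ← mul_div_assoc, div_le_iff₀ hL, mul_comm]; gcongr)
  refine ⟨i, (Nat.pow_le_of_le_log hN.card_pos.ne' him).trans hsparse,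
    hi.trans (card_le_card fun j hj => mem_filter.mpr ⟨mem_univ j, ?_⟩)⟩
  calc √Q / √(2 ^ i * L) = √(Q / L / 2 ^ i) := by
        rw [div_div, mul_comm L, Real.sqrt_div' Q (by positivity)]
    _ ≤ √(θ j ^ 2) := Real.sqrt_le_sqrt (mem_filter.mp hj).2
    _ = |θ j| := Real.sqrt_sq_eq_abs (θ j)

/-- Let `θ ∈ ℝ^p` be nonzero with at most `k ≥ 1` nonzero coordinates.  Then there exists
`s = 2^i ≤ k` such that `#{j : |θ^j| ≥ ‖θ‖₂/√(s log₂(2p))} ≥ s`; consequently the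
effective sparsity satisfies `s(θ) ≤ k`. -/
theorem effective_sparsity_le_sparsity (p k : ℕ) (hk : 1 ≤ k) (θ : Fin p → ℝ) (hθ : θ ≠ 0)
    (hsparse : (Finset.univ.filter (fun j : Fin p => θ j ≠ 0)).card ≤ k) :
    ∃ i : ℕ, 2 ^ i ≤ k ∧
      2 ^ i ≤ (Finset.univ.filter (fun j : Fin p =>
        Real.sqrt (∑ l, θ l ^ 2) / Real.sqrt ((2 : ℝ) ^ i * Real.logb 2 (2 * p))
          ≤ |θ j|)).card :=
  effective_sparsity_le_sparsity_general p k θ hθ hsparse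
end

section
/- Let p ≥ 2, let s ≥ 2 be an even natural number, let θ ∈ ℝ^p be nonzero, and let 0 < β ≤ ‖θ‖₂. Assume that the set {j ∈ {1,…,p} : |θ^j| ≥ ‖θ‖₂ / √(s·log₂(2p))} has cardinality at least s. Then there exists a sign ε ∈ {−1, +1} such that the set {j ∈ {1,…,p} : ε·θ^j ≥ β / √(s·log₂(2p)) and |θ^j| ≤ ‖θ‖₂/√2} has cardinality at least s/2. -/
/-!
With `L = √(s log₂(2p))`, each of the `s` coordinates with `|θ^j| ≥ ‖θ‖₂ / L`
satisfies `θ^j ≥ β / L` or `-θ^j ≥ β / L`. At most one of them exceeds `‖θ‖₂ / √2`,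
since two such coordinates would carry more than the whole squared norm. So the
positive and the negative sets together hold at least `s - 1` of them, and one of
the two holds at least `s / 2`.
-/

open Finset

variable {ι : Type*} [Fintype ι]

lemma card_filter_div_sqrt_two_lt_abs_le_one (θ : ι → ℝ) :
    #{j | √(∑ k, θ k ^ 2) / √2 < |θ j|} ≤ 1 := by
  have half_lt_sq {j : ι} (hj : √(∑ k, θ k ^ 2) / √2 < |θ j|) :
      (∑ k, θ k ^ 2) / 2 < θ j ^ 2 := by
    have hsq := sq_lt_sq.mpr ((abs_of_nonneg (by positivity)).trans_lt hj)
    rwa [div_pow, Real.sq_sqrt (by positivity), Real.sq_sqrt zero_le_two] at hsq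
  classical
  refine card_le_one.mpr fun a ha b hb => by_contra fun hab => ?_
  have hpair : θ a ^ 2 + θ b ^ 2 ≤ ∑ k, θ k ^ 2 := by
    rw [← sum_pair (f := fun k => θ k ^ 2) hab]
    exact sum_le_univ_sum_of_nonneg fun k => sq_nonneg _
  linarith [half_lt_sq (mem_filter.mp ha).2, half_lt_sq (mem_filter.mp hb).2]

lemma card_le_card_filter_abs_le_div_sqrt_two_add_one (θ : ι → ℝ) (S : Finset ι) :
    #S ≤ #{j ∈ S | |θ j| ≤ √(∑ k, θ k ^ 2) / √2} + 1 := by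
  have hlarge : #{j ∈ S | ¬|θ j| ≤ √(∑ k, θ k ^ 2) / √2} ≤ 1 := by
    refine (card_le_card fun j hj => ?_).trans (card_filter_div_sqrt_two_lt_abs_le_one θ)
    simp only [mem_filter, not_le, mem_univ, true_and] at hj ⊢
    exact hj.2
  rw [← card_filter_add_card_filter_not (fun j => |θ j| ≤ √(∑ k, θ k ^ 2) / √2)]
  omega

lemma card_filter_le_abs_and_le_card_add_card [DecidableEq ι] (θ : ι → ℝ) (c : ℝ)
    (Q : ι → Prop) [DecidablePred Q] :
    #{j | c ≤ |θ j| ∧ Q j} ≤ #{j | c ≤ θ j ∧ Q j} + #{j | c ≤ -θ j ∧ Q j} := by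
  refine (card_le_card fun j hj => ?_).trans (card_union_le _ _)
  simp only [mem_filter, mem_union, mem_univ, true_and, le_abs] at hj ⊢
  tauto

theorem half_signal_coordinates_same_sign_general (p s : ℕ)
    (θ : Fin p → ℝ)
    (β : ℝ) (hβθ : β ≤ Real.sqrt (∑ k, θ k ^ 2))
    (hcard : s ≤ (Finset.univ.filter (fun j : Fin p =>
        Real.sqrt (∑ k, θ k ^ 2) / Real.sqrt (s * Real.logb 2 (2 * p)) ≤ |θ j|)).card) :
    ∃ ε : ℝ, (ε = 1 ∨ ε = -1) ∧
      s / 2 ≤ (Finset.univ.filter (fun j : Fin p =>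
        β / Real.sqrt (s * Real.logb 2 (2 * p)) ≤ ε * θ j ∧
          |θ j| ≤ Real.sqrt (∑ k, θ k ^ 2) / Real.sqrt 2)).card := by
  set L := √(s * Real.logb 2 (2 * p))
  set N := √(∑ k, θ k ^ 2)
  have hthreshold : β / L ≤ N / L := div_le_div_of_nonneg_right hβθ (Real.sqrt_nonneg _)
  have hbounded :
      #{j | N / L ≤ |θ j|} ≤ #{j ∈ {j | N / L ≤ |θ j|} | |θ j| ≤ N / √2} + 1 :=
    card_le_card_filter_abs_le_div_sqrt_two_add_one θ _
  have hsubset : #{j ∈ {j | N / L ≤ |θ j|} | |θ j| ≤ N / √2} ≤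
      #{j | β / L ≤ |θ j| ∧ |θ j| ≤ N / √2} := by
    refine card_le_card fun j hj => ?_
    simp only [mem_filter, mem_univ, true_and] at hj ⊢
    exact ⟨hthreshold.trans hj.1, hj.2⟩
  have hsplit := card_filter_le_abs_and_le_card_add_card θ (β / L) (fun j => |θ j| ≤ N / √2)
  rcases (by omega : s / 2 ≤ #{j | β / L ≤ θ j ∧ |θ j| ≤ N / √2} ∨
      s / 2 ≤ #{j | β / L ≤ -θ j ∧ |θ j| ≤ N / √2}) with hpos | hneg
  · exact ⟨1, Or.inl rfl, by simpa only [one_mul] using hpos⟩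
  · exact ⟨-1, Or.inr rfl, by simpa only [neg_one_mul] using hneg⟩

/-- Let `p ≥ 2`, let `s ≥ 2` be even, let `θ ∈ ℝ^p` be nonzero and let `0 < β ≤ ‖θ‖₂`.
If `#{j : |θ^j| ≥ ‖θ‖₂/√(s log₂(2p))} ≥ s`, then there is a sign `ε ∈ {−1, +1}` such that
`#{j : ε θ^j ≥ β/√(s log₂(2p)) and |θ^j| ≤ ‖θ‖₂/√2} ≥ s/2`. -/
theorem half_signal_coordinates_same_sign (p s : ℕ) (hp : 2 ≤ p) (hs : 2 ≤ s)
    (hseven : Even s) (θ : Fin p → ℝ) (hθ : θ ≠ 0)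
    (β : ℝ) (hβ : 0 < β) (hβθ : β ≤ Real.sqrt (∑ k, θ k ^ 2))
    (hcard : s ≤ (Finset.univ.filter (fun j : Fin p =>
        Real.sqrt (∑ k, θ k ^ 2) / Real.sqrt (s * Real.logb 2 (2 * p)) ≤ |θ j|)).card) :
    ∃ ε : ℝ, (ε = 1 ∨ ε = -1) ∧
      s / 2 ≤ (Finset.univ.filter (fun j : Fin p =>
        β / Real.sqrt (s * Real.logb 2 (2 * p)) ≤ ε * θ j ∧
          |θ j| ≤ Real.sqrt (∑ k, θ k ^ 2) / Real.sqrt 2)).card :=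
  half_signal_coordinates_same_sign_general p s θ β hβθ hcard
end

section
/- Let J be a nonempty finite set, let b ∈ ℝ with b ≠ 0, and for each j ∈ J let θ^j ∈ ℝ satisfy sgn(b)·θ^j ≥ |b|. Let (Y_i^j)_{i ∈ ℕ, j ∈ J} be a family of independent real random variables with Y_i^j ~ N(θ^j, 1). Then for every m ∈ ℕ, the probability that for every j ∈ J there exists h ∈ ℕ with h ≥ m/3 and Σ_{i=1}^h sgn(b)·(Y_i^j − b/2) ≤ 0 is at most exp( −|J|·b²·m/24 ). -/
/-!
For a fixed `j`, the walk `S_h = ∑_{i<h} sgn(b) (Y_i^j - b/2)` has independent `N(μ, 1)` steps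
with `μ ≥ |b|/2`, so `exp (-|b| S_h / 2)` is a nonnegative supermartingale whose one-step factor
has mean at most `exp (-b²/8)`. Optional stopping at the first `h ≥ n` with `S_h ≤ 0` bounds the
probability that the walk is ever `≤ 0` after time `n = ⌈m/3⌉` by `exp (-b²/8) ^ n`. The events
for different `j` depend on disjoint blocks of the independent family, so the probability of
their intersection is the product of these bounds.
-/

open MeasureTheory ProbabilityTheory Finset Real

lemma Real.sign_mul_self_eq_abs (r : ℝ) : Real.sign r * r = |r| := by
  rcases lt_trichotomy r 0 with hr | rfl | hr
  · rw [Real.sign_of_neg hr, abs_of_neg hr, neg_one_mul]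
  · simp
  · rw [Real.sign_of_pos hr, abs_of_pos hr, one_mul]

lemma Real.sign_sq_le_one (r : ℝ) : Real.sign r ^ 2 ≤ 1 := by
  rcases Real.sign_apply_eq r with h | h | h <;> rw [h] <;> norm_num

namespace ProbabilityTheory

variable {Ω : Type*} {m0 : MeasurableSpace Ω} {μ : Measure Ω}

section PartialSums

variable {X : ℕ → Ω → ℝ}

/-- Its `n`-th σ-algebra is generated by `X 0, …, X (n - 1)`, so `X n` is independent of it. -/
noncomputable abbrev partialSumFiltration (hX : ∀ i, Measurable (X i)) : Filtration ℕ m0 :=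
  Filtration.natural (fun n ω => ∑ i ∈ range n, X i ω)
    fun n => (Finset.measurable_sum (range n) fun i _ => hX i).stronglyMeasurable

lemma measurable_partialSumFiltration (hX : ∀ i, Measurable (X i)) (n : ℕ) :
    Measurable[partialSumFiltration hX n] fun ω => ∑ i ∈ range n, X i ω :=
  (Filtration.stronglyAdapted_natural
    (fun n => (Finset.measurable_sum (range n) fun i _ => hX i).stronglyMeasurable) n).measurable

lemma partialSumFiltration_le_iSup (hX : ∀ i, Measurable (X i)) (n : ℕ) :
    partialSumFiltration hX n ≤ ⨆ i ∈ Set.Iio n, MeasurableSpace.comap (X i) inferInstance := by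
  refine iSup₂_le fun k hk => Measurable.comap_le ?_
  refine Finset.measurable_sum _ fun i hi => (comap_measurable (X i)).mono ?_ le_rfl
  exact le_iSup₂ (f := fun i (_ : i ∈ Set.Iio n) => MeasurableSpace.comap (X i) inferInstance) i
    (by simp at hi ⊢; omega)

lemma indep_partialSumFiltration (hind : iIndepFun X μ) (hX : ∀ i, Measurable (X i)) (n : ℕ) :
    Indep (partialSumFiltration hX n) (MeasurableSpace.comap (X n) inferInstance) μ := by
  have h := indep_iSup_of_disjoint (fun i => (hX i).comap_le) hind.iIndep
    (S := Set.Iio n) (T := {n}) (by simp)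
  rw [_root_.iSup_singleton] at h
  exact indep_of_indep_of_le_left h (partialSumFiltration_le_iSup hX n)

lemma integral_exp_mul_partialSum_le (hind : iIndepFun X μ) (hX : ∀ i, Measurable (X i))
    {t κ : ℝ} (hmgf : ∀ i, mgf (X i) μ t ≤ κ) (n : ℕ) :
    ∫ ω, exp (t * ∑ i ∈ range n, X i ω) ∂μ ≤ κ ^ n :=
  calc ∫ ω, exp (t * ∑ i ∈ range n, X i ω) ∂μ = mgf (∑ i ∈ range n, X i) μ t := by
        simp only [mgf, Finset.sum_apply]
    _ = ∏ i ∈ range n, mgf (X i) μ t := hind.mgf_sum hX (range n)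
    _ ≤ ∏ _i ∈ range n, κ := prod_le_prod (fun i _ => mgf_nonneg) fun i _ => hmgf i
    _ = κ ^ n := by rw [prod_const, card_range]

variable [IsProbabilityMeasure μ]

lemma supermartingale_exp_mul_partialSum (hind : iIndepFun X μ) (hX : ∀ i, Measurable (X i))
    {t : ℝ} (hint : ∀ i, Integrable (fun ω => exp (t * X i ω)) μ)
    (hmgf : ∀ i, mgf (X i) μ t ≤ 1) :
    Supermartingale (fun n ω => exp (t * ∑ i ∈ range n, X i ω)) (partialSumFiltration hX) μ := by
  have hM_int : ∀ n, Integrable (fun ω => exp (t * ∑ i ∈ range n, X i ω)) μ := fun n => by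
    simpa only [Finset.sum_apply] using hind.integrable_exp_mul_sum hX (fun i _ => hint i)
  have hM_meas : ∀ n, Measurable[partialSumFiltration hX n]
      fun ω => exp (t * ∑ i ∈ range n, X i ω) := fun n =>
    ((measurable_partialSumFiltration hX n).const_mul t).exp
  refine supermartingale_of_setIntegral_succ_le (fun n => (hM_meas n).stronglyMeasurable) hM_int
    fun n s hs => ?_
  have hs_meas : MeasurableSet s := partialSumFiltration hX |>.le n s hs
  have hsucc : ∀ ω, exp (t * ∑ i ∈ range (n + 1), X i ω)
      = exp (t * ∑ i ∈ range n, X i ω) * exp (t * X n ω) := fun ω => by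
    rw [sum_range_succ, mul_add, exp_add]
  have hindep : IndepFun (s.indicator fun ω => exp (t * ∑ i ∈ range n, X i ω))
      (fun ω => exp (t * X n ω)) μ := by
    rw [IndepFun_iff_Indep]
    refine indep_of_indep_of_le_right (indep_of_indep_of_le_left
      (indep_partialSumFiltration hind hX n) ((hM_meas n).indicator hs).comap_le) ?_
    exact ((measurable_exp.comp (measurable_const_mul t)).comp (comap_measurable (X n))).comap_le
  calc ∫ ω in s, exp (t * ∑ i ∈ range (n + 1), X i ω) ∂μ
      = ∫ ω, s.indicator (fun ω => exp (t * ∑ i ∈ range n, X i ω)) ω * exp (t * X n ω) ∂μ := by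
        rw [← integral_indicator hs_meas]
        congr 1 with ω
        by_cases hω : ω ∈ s <;> simp [hω, hsucc]
    _ = (∫ ω in s, exp (t * ∑ i ∈ range n, X i ω) ∂μ) * mgf (X n) μ t := by
        rw [hindep.integral_fun_mul_eq_mul_integral ((hM_int n).indicator hs_meas).1
          (hint n).1, integral_indicator hs_meas, mgf]
    _ ≤ ∫ ω in s, exp (t * ∑ i ∈ range n, X i ω) ∂μ :=
        mul_le_of_le_one_right (setIntegral_nonneg hs_meas fun ω _ => (exp_pos _).le) (hmgf n)

lemma measure_exists_mem_Icc_partialSum_nonpos_le (hind : iIndepFun X μ)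
    (hX : ∀ i, Measurable (X i)) {t κ : ℝ} (ht : t ≤ 0)
    (hint : ∀ i, Integrable (fun ω => exp (t * X i ω)) μ) (hmgf : ∀ i, mgf (X i) μ t ≤ κ)
    (hκ : κ ≤ 1) {n N : ℕ} (hnN : n ≤ N) :
    μ {ω | ∃ h ∈ Set.Icc n N, ∑ i ∈ range h, X i ω ≤ 0} ≤ ENNReal.ofReal (κ ^ n) := by
  set M : ℕ → Ω → ℝ := fun n ω => exp (t * ∑ i ∈ range n, X i ω)
  have hM : Supermartingale M (partialSumFiltration hX) μ :=
    supermartingale_exp_mul_partialSum hind hX hint fun i => (hmgf i).trans hκ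
  set τ : Ω → ℕ := hittingBtwn (fun n ω => ∑ i ∈ range n, X i ω) (Set.Iic 0) n N
  have hτ : IsStoppingTime (partialSumFiltration hX) fun ω => (τ ω : ℕ∞) :=
    Adapted.isStoppingTime_hittingBtwn (measurable_partialSumFiltration hX) measurableSet_Iic
  have hτ_le : ∀ ω, ((τ ω : ℕ) : ℕ∞) ≤ N := fun ω => Nat.cast_le.mpr (hittingBtwn_le ω)
  have hstop : ∫ ω, M (τ ω) ω ∂μ ≤ ∫ ω, M n ω ∂μ := by
    have h := hM.neg.expected_stoppedValue_mono (isStoppingTime_const _ n) hτ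
      (fun ω => Nat.cast_le.mpr (le_hittingBtwn hnN ω)) hτ_le
    change ∫ ω, -M n ω ∂μ ≤ ∫ ω, -M (τ ω) ω ∂μ at h
    rwa [integral_neg, integral_neg, neg_le_neg_iff] at h
  have hmarkov : {ω | ∃ h ∈ Set.Icc n N, ∑ i ∈ range h, X i ω ≤ 0} ⊆ {ω | 1 ≤ M (τ ω) ω} := by
    rintro ω ⟨h, hh, hS⟩
    have hτS : ∑ i ∈ range (τ ω), X i ω ≤ 0 :=
      stoppedValue_hittingBtwn_mem (u := fun n ω => ∑ i ∈ range n, X i ω) (s := Set.Iic 0)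
        ⟨h, hh, hS⟩
    exact one_le_exp (mul_nonneg_of_nonpos_of_nonpos ht hτS)
  have hMτ_int : Integrable (fun ω => M (τ ω) ω) μ :=
    integrable_stoppedValue ℕ hτ hM.integrable hτ_le
  have hMτ_markov : μ.real {ω | 1 ≤ M (τ ω) ω} ≤ ∫ ω, M (τ ω) ω ∂μ := by
    simpa only [one_mul] using
      mul_meas_ge_le_integral_of_nonneg (ae_of_all _ fun ω => (exp_pos _).le) hMτ_int 1
  calc μ {ω | ∃ h ∈ Set.Icc n N, ∑ i ∈ range h, X i ω ≤ 0}
      ≤ μ {ω | 1 ≤ M (τ ω) ω} := measure_mono hmarkov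
    _ = ENNReal.ofReal (μ.real {ω | 1 ≤ M (τ ω) ω}) := (ofReal_measureReal).symm
    _ ≤ ENNReal.ofReal (κ ^ n) := ENNReal.ofReal_le_ofReal <|
        hMτ_markov.trans <| hstop.trans <| integral_exp_mul_partialSum_le hind hX hmgf n

lemma measure_exists_ge_partialSum_nonpos_le (hind : iIndepFun X μ)
    (hX : ∀ i, Measurable (X i)) {t κ : ℝ} (ht : t ≤ 0)
    (hint : ∀ i, Integrable (fun ω => exp (t * X i ω)) μ) (hmgf : ∀ i, mgf (X i) μ t ≤ κ)
    (hκ : κ ≤ 1) (n : ℕ) :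
    μ {ω | ∃ h, n ≤ h ∧ ∑ i ∈ range h, X i ω ≤ 0} ≤ ENNReal.ofReal (κ ^ n) := by
  have hunion : {ω | ∃ h, n ≤ h ∧ ∑ i ∈ range h, X i ω ≤ 0}
      = ⋃ N, {ω | ∃ h ∈ Set.Icc n (n + N), ∑ i ∈ range h, X i ω ≤ 0} := by
    ext ω
    simp only [Set.mem_ofPred_eq, Set.mem_iUnion, Set.mem_Icc]
    exact ⟨fun ⟨h, hh, hS⟩ => ⟨h, h, ⟨hh, by omega⟩, hS⟩, fun ⟨_, h, hh, hS⟩ => ⟨h, hh.1, hS⟩⟩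
  have hmono : Monotone fun N => {ω | ∃ h ∈ Set.Icc n (n + N), ∑ i ∈ range h, X i ω ≤ 0} :=
    fun N N' hN ω ⟨h, hh, hS⟩ => ⟨h, ⟨hh.1, hh.2.trans (by omega)⟩, hS⟩
  rw [hunion, hmono.measure_iUnion]
  exact iSup_le fun N => measure_exists_mem_Icc_partialSum_nonpos_le hind hX ht hint hmgf hκ
    (Nat.le_add_right n N)

end PartialSums

lemma integrable_exp_mul_of_hasLaw_gaussianReal {X : Ω → ℝ} {m : ℝ} {v : NNReal}
    (hX : HasLaw X (gaussianReal m v) μ) (t : ℝ) : Integrable (fun ω => exp (t * X ω)) μ := by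
  have := hX.isProbabilityMeasure
  rw [← mgf_pos_iff, mgf_gaussianReal hX.map_eq]
  exact exp_pos _

lemma mgf_sign_mul_sub_half_le {Y : Ω → ℝ} {b θ : ℝ} (hY : HasLaw Y (gaussianReal θ 1) μ)
    (hθ : |b| ≤ Real.sign b * θ) :
    mgf (fun ω => Real.sign b * (Y ω - b / 2)) μ (-(|b| / 2)) ≤ exp (-(b ^ 2 / 8)) := by
  rw [mgf_gaussianReal (gaussianReal_const_mul (gaussianReal_sub_const hY (b / 2)) _).map_eq,
    exp_le_exp]
  have hsign := Real.sign_mul_self_eq_abs b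
  have hsq := Real.sign_sq_le_one b
  have habs : |b| ^ 2 = b ^ 2 := sq_abs b
  simp only [NNReal.coe_mk, mul_one]
  -- the exponent is `-(|b|/2) sgn(b) θ + b²/4 + sgn(b)² b²/8 ≤ -b²/2 + b²/4 + b²/8`
  nlinarith [abs_nonneg b, sq_nonneg b]

lemma measure_exists_ge_sum_sign_mul_sub_half_nonpos_le [IsProbabilityMeasure μ]
    {Y : ℕ → Ω → ℝ} (hind : iIndepFun Y μ) (hmeas : ∀ i, Measurable (Y i)) {b θ : ℝ}
    (hY : ∀ i, HasLaw (Y i) (gaussianReal θ 1) μ) (hθ : |b| ≤ Real.sign b * θ) (n : ℕ) :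
    μ {ω | ∃ h, n ≤ h ∧ ∑ i ∈ range h, Real.sign b * (Y i ω - b / 2) ≤ 0}
      ≤ ENNReal.ofReal (exp (-(b ^ 2 / 8)) ^ n) :=
  measure_exists_ge_partialSum_nonpos_le
    (hind.comp (fun _ y => Real.sign b * (y - b / 2)) fun _ => by fun_prop)
    (fun i => ((hmeas i).sub_const _).const_mul _) (neg_nonpos.mpr (by positivity))
    (fun i => integrable_exp_mul_of_hasLaw_gaussianReal
      (gaussianReal_const_mul (gaussianReal_sub_const (hY i) _) _) _)
    (fun i => mgf_sign_mul_sub_half_le (hY i) hθ) (exp_le_one_iff.mpr (by nlinarith [sq_nonneg b]))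
    n

lemma iIndep.measure_biInter_eq_prod_of_fibers {ι κ : Type*} {m : ι → MeasurableSpace Ω}
    (h_le : ∀ i, m i ≤ m0) (h_indep : iIndep m μ) (p : ι → κ) {A : κ → Set Ω}
    (hA : ∀ k, MeasurableSet[⨆ i ∈ p ⁻¹' {k}, m i] (A k)) (s : Finset κ) :
    μ (⋂ k ∈ s, A k) = ∏ k ∈ s, μ (A k) := by
  classical
  induction s using Finset.induction_on with
  | empty => simp [h_indep.isProbabilityMeasure.measure_univ]
  | insert k s hk ih =>
    have hmono : ∀ k' ∈ s, (⨆ i ∈ p ⁻¹' {k'}, m i) ≤ ⨆ i ∈ p ⁻¹' s, m i := fun k' hk' =>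
      biSup_mono fun i hi => by simp_all
    have hs : MeasurableSet[⨆ i ∈ p ⁻¹' s, m i] (⋂ k' ∈ s, A k') :=
      .biInter s.countable_toSet fun k' hk' => hmono k' hk' _ (hA k')
    have hdisj : Disjoint (p ⁻¹' {k}) (p ⁻¹' s) :=
      Set.disjoint_left.mpr fun i hi his => hk (by simp_all)
    rw [Finset.set_biInter_insert, prod_insert hk, ← ih]
    exact (Indep_iff _ _ _).mp (indep_iSup_of_disjoint h_le h_indep hdisj) _ _ (hA k) hs

lemma iIndepFun.measure_biInter_preimage_row_eq_prod {ι κ β : Type*} [MeasurableSpace β]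
    {Y : ι × κ → Ω → β} (hind : iIndepFun Y μ) (hmeas : ∀ q, Measurable (Y q))
    {B : κ → Set (ι → β)} (hB : ∀ k, MeasurableSet (B k)) (s : Finset κ) :
    μ (⋂ k ∈ s, (fun ω i => Y (i, k) ω) ⁻¹' B k)
      = ∏ k ∈ s, μ ((fun ω i => Y (i, k) ω) ⁻¹' B k) := by
  refine hind.iIndep.measure_biInter_eq_prod_of_fibers (fun q => (hmeas q).comap_le) Prod.snd
    (fun k => ?_) s
  let m_row := ⨆ q ∈ Prod.snd ⁻¹' {k}, MeasurableSpace.comap (Y q) inferInstance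
  have hrow : Measurable[m_row] fun ω i => Y (i, k) ω :=
    (@measurable_pi_iff _ _ _ m_row _ _).mpr fun i => (comap_measurable (Y (i, k))).mono
      (le_iSup₂ (f := fun q (_ : q ∈ Prod.snd ⁻¹' {k}) => MeasurableSpace.comap (Y q) inferInstance)
        (i, k) rfl) le_rfl
  exact hrow (hB k)

end ProbabilityTheory

lemma exp_neg_sq_div_eight_pow_ceil_pow_le (b : ℝ) (m k : ℕ) :
    (exp (-(b ^ 2 / 8)) ^ ⌈(m : ℝ) / 3⌉₊) ^ k ≤ exp (-(k : ℝ) * b ^ 2 * m / 24) := by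
  rw [← exp_nat_mul, ← exp_nat_mul, exp_le_exp]
  have hceil : (m : ℝ) / 3 ≤ ⌈(m : ℝ) / 3⌉₊ := Nat.le_ceil _
  nlinarith [mul_nonneg (mul_nonneg (Nat.cast_nonneg k) (sub_nonneg.mpr hceil)) (sq_nonneg b)]

theorem simultaneous_tail_collapse_bound_general
    {Ω J : Type*} [MeasureSpace Ω] [IsProbabilityMeasure (ℙ : Measure Ω)]
    [Fintype J]
    (b : ℝ) (θ : J → ℝ) (hθ : ∀ j, |b| ≤ Real.sign b * θ j)
    (Y : ℕ × J → Ω → ℝ) (hmeas : ∀ q, Measurable (Y q))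
    (hindep : iIndepFun Y ℙ)
    (hdist : ∀ i j, Measure.map (Y (i, j)) ℙ = gaussianReal (θ j) 1)
    (m : ℕ) :
    ℙ {ω | ∀ j : J, ∃ h : ℕ, (m : ℝ) / 3 ≤ (h : ℝ) ∧
          ∑ i ∈ Finset.range h, Real.sign b * (Y (i, j) ω - b / 2) ≤ 0}
      ≤ ENNReal.ofReal (Real.exp (-(Fintype.card J : ℝ) * b ^ 2 * m / 24)) := by
  set B : Set (ℕ → ℝ) :=
    {u | ∃ h, ⌈(m : ℝ) / 3⌉₊ ≤ h ∧ ∑ i ∈ range h, Real.sign b * (u i - b / 2) ≤ 0}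
  have hevent : {ω | ∀ j : J, ∃ h : ℕ, (m : ℝ) / 3 ≤ (h : ℝ) ∧
      ∑ i ∈ Finset.range h, Real.sign b * (Y (i, j) ω - b / 2) ≤ 0}
      = ⋂ j ∈ univ, (fun ω i => Y (i, j) ω) ⁻¹' B := by
    ext ω
    simp [B, Nat.ceil_le]
  have hB : MeasurableSet B := by measurability
  have hrow : ∀ j, ℙ ((fun ω i => Y (i, j) ω) ⁻¹' B)
      ≤ ENNReal.ofReal (exp (-(b ^ 2 / 8)) ^ ⌈(m : ℝ) / 3⌉₊) := fun j =>
    measure_exists_ge_sum_sign_mul_sub_half_nonpos_le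
      (hindep.precomp (g := fun i => (i, j)) fun _ _ h => (Prod.mk.inj h).1)
      (fun i => hmeas (i, j)) (fun i => ⟨(hmeas (i, j)).aemeasurable, hdist i j⟩) (hθ j) _
  rw [hevent, hindep.measure_biInter_preimage_row_eq_prod hmeas fun _ => hB]
  calc ∏ j ∈ univ, ℙ ((fun ω i => Y (i, j) ω) ⁻¹' B)
      ≤ ∏ _j ∈ (univ : Finset J), ENNReal.ofReal (exp (-(b ^ 2 / 8)) ^ ⌈(m : ℝ) / 3⌉₊) :=
        prod_le_prod' fun j _ => hrow j
    _ ≤ ENNReal.ofReal (Real.exp (-(Fintype.card J : ℝ) * b ^ 2 * m / 24)) := by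
        rw [prod_const, card_univ, ← ENNReal.ofReal_pow (by positivity)]
        exact ENNReal.ofReal_le_ofReal (exp_neg_sq_div_eight_pow_ceil_pow_le b m _)

/-- Let `J` be a nonempty finite index set, `b ≠ 0` real, and `θ^j` reals with
`sgn(b) θ^j ≥ |b|` for all `j ∈ J`.  Let `(Y (i, j))` (with `Y (i, j)` standing for
`Y_{i+1}^j`) be a family of independent random variables with `Y (i, j) ~ N(θ^j, 1)`.
Then for every `m ∈ ℕ`, the probability that for every `j ∈ J` there exists `h ∈ ℕ` with
`h ≥ m/3` and `∑_{i=1}^h sgn(b)(Y_i^j - b/2) ≤ 0` is at most `exp(-|J| b² m / 24)`. -/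
theorem simultaneous_tail_collapse_bound
    {Ω J : Type*} [MeasureSpace Ω] [IsProbabilityMeasure (ℙ : Measure Ω)]
    [Fintype J] [Nonempty J]
    (b : ℝ) (hb : b ≠ 0) (θ : J → ℝ) (hθ : ∀ j, |b| ≤ Real.sign b * θ j)
    (Y : ℕ × J → Ω → ℝ) (hmeas : ∀ q, Measurable (Y q))
    (hindep : iIndepFun Y ℙ)
    (hdist : ∀ i j, Measure.map (Y (i, j)) ℙ = gaussianReal (θ j) 1)
    (m : ℕ) :
    ℙ {ω | ∀ j : J, ∃ h : ℕ, (m : ℝ) / 3 ≤ (h : ℝ) ∧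
          ∑ i ∈ Finset.range h, Real.sign b * (Y (i, j) ω - b / 2) ≤ 0}
      ≤ ENNReal.ofReal (Real.exp (-(Fintype.card J : ℝ) * b ^ 2 * m / 24)) :=
  simultaneous_tail_collapse_bound_general b θ hθ Y hmeas hindep hdist m
end
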